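/- arXiv:1801.01301 — 7 statements merged into one kernel-verified Lean document; each statement's English description precedes it below -/
import Mathlib

section
/- Let 0 ≤ p10 < p00 ≤ 1 and 0 ≤ ρ0 < ρ1 < 1. Define γ₀(π) = ((1−π)(1−ρ1) p10 + π(1−ρ0) p00) / ((1−ρ1)(1−π) + (1−ρ0)π) on [0,1]. Then γ₀ is monotonically increasing and concave on [0,1]. -/
theorem gamma0_monotone_concave
    (p00 p10 ρ0 ρ1 : ℝ)
    (h10 : 0 ≤ p10) (hp : p10 < p00) (h00 : p00 ≤ 1)
    (hρ0 : 0 ≤ ρ0) (hρ : ρ0 < ρ1) (hρ1 : ρ1 < 1) :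
    MonotoneOn
      (fun π : ℝ =>
        ((1 - π) * (1 - ρ1) * p10 + π * (1 - ρ0) * p00)
          / ((1 - ρ1) * (1 - π) + (1 - ρ0) * π))
      (Set.Icc (0:ℝ) 1) ∧
    ConcaveOn ℝ (Set.Icc (0:ℝ) 1)
      (fun π : ℝ =>
        ((1 - π) * (1 - ρ1) * p10 + π * (1 - ρ0) * p00)
          / ((1 - ρ1) * (1 - π) + (1 - ρ0) * π)) := by
  have hu : 0 < 1 - ρ1 := by linarith
  have hv : 0 < 1 - ρ0 := by linarith
  constructor
  · intro x hx y hy hxy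
    obtain ⟨hx0, hx1⟩ := hx
    obtain ⟨hy0, hy1⟩ := hy
    have hDx : 0 < (1 - ρ1) * (1 - x) + (1 - ρ0) * x := by nlinarith
    have hDy : 0 < (1 - ρ1) * (1 - y) + (1 - ρ0) * y := by nlinarith
    simp only
    rw [div_le_div_iff₀ hDx hDy]
    nlinarith [mul_nonneg (sub_nonneg.mpr hxy)
      (mul_pos (mul_pos hu hv) (sub_pos.mpr hp)).le]
  · refine ⟨convex_Icc 0 1, ?_⟩
    intro x hx y hy a b ha hb hab
    obtain ⟨hx0, hx1⟩ := hx
    obtain ⟨hy0, hy1⟩ := hy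
    have hz0 : 0 ≤ a * x + b * y := by positivity
    have hz1 : a * x + b * y ≤ 1 := by nlinarith
    have hDx : 0 < (1 - ρ1) * (1 - x) + (1 - ρ0) * x := by nlinarith
    have hDy : 0 < (1 - ρ1) * (1 - y) + (1 - ρ0) * y := by nlinarith
    have hDz : 0 < (1 - ρ1) * (1 - (a * x + b * y)) + (1 - ρ0) * (a * x + b * y) := by
      nlinarith
    simp only [smul_eq_mul]
    rw [mul_div_assoc', mul_div_assoc', div_add_div _ _ hDx.ne' hDy.ne',
      div_le_div_iff₀ (mul_pos hDx hDy) hDz]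
    have hb' : b = 1 - a := by linarith
    subst hb'
    have key :
        ((1 - (a * x + (1 - a) * y)) * (1 - ρ1) * p10 +
            (a * x + (1 - a) * y) * (1 - ρ0) * p00) *
          (((1 - ρ1) * (1 - x) + (1 - ρ0) * x) * ((1 - ρ1) * (1 - y) + (1 - ρ0) * y)) -
        (a * ((1 - x) * (1 - ρ1) * p10 + x * (1 - ρ0) * p00) *
              ((1 - ρ1) * (1 - y) + (1 - ρ0) * y) +
            ((1 - ρ1) * (1 - x) + (1 - ρ0) * x) *
              ((1 - a) * ((1 - y) * (1 - ρ1) * p10 + y * (1 - ρ0) * p00))) *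
          ((1 - ρ1) * (1 - (a * x + (1 - a) * y)) + (1 - ρ0) * (a * x + (1 - a) * y)) =
        (1 - ρ1) * (1 - ρ0) * (p00 - p10) * (ρ1 - ρ0) * a * (1 - a) * (x - y) ^ 2 := by
      ring
    have pos : 0 ≤ (1 - ρ1) * (1 - ρ0) * (p00 - p10) * (ρ1 - ρ0) * a * (1 - a) * (x - y) ^ 2 := by
      have h1a : (0:ℝ) ≤ 1 - a := by linarith
      have := mul_pos (mul_pos (mul_pos hu hv) (sub_pos.mpr hp)) (sub_pos.mpr hρ)
      positivity
    linarith [key, pos]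
end

section
/- Under the Bellman operator T of the single-armed lazy restless bandit (with R_S(π) = πR0 + (1−π)R1, ρ(π) = πρ0 + (1−π)ρ1, affine no-observation update γ₂, and Bayesian updates γ₁, γ₀ of the form (affine)/(affine)), if V is convex on [0,1], then TV is convex on [0,1]. Consequently, the unique fixed point V* of T is convex in π. -/
lemma persp_aux (V : ℝ → ℝ) (D : ℝ)
    (hV : ∀ u ∈ Set.Icc (0:ℝ) 1, ∀ v ∈ Set.Icc (0:ℝ) 1, ∀ c d : ℝ,
      0 ≤ c → 0 ≤ d → c + d = 1 → V (c*u + d*v) ≤ c * V u + d * V v + D)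
    (a b dx dy dz gx gy gz Nx Ny Nz : ℝ)
    (ha : 0 ≤ a) (hb : 0 ≤ b)
    (hdx : 0 ≤ dx) (hdy : 0 ≤ dy)
    (hdz : dz = a*dx + b*dy) (hNz : Nz = a*Nx + b*Ny)
    (hgx : gx ∈ Set.Icc (0:ℝ) 1) (hgy : gy ∈ Set.Icc (0:ℝ) 1)
    (hx : dx * gx = Nx) (hy : dy * gy = Ny) (hz : dz * gz = Nz) :
    dz * V gz ≤ a * (dx * V gx) + b * (dy * V gy) + dz * D := by
  rcases eq_or_lt_of_le (show 0 ≤ dz by nlinarith) with h0 | h0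
  · have h1 : a * dx = 0 := by nlinarith
    have h2 : b * dy = 0 := by nlinarith
    have e1 : a * (dx * V gx) = 0 := by rw [← mul_assoc, h1, zero_mul]
    have e2 : b * (dy * V gy) = 0 := by rw [← mul_assoc, h2, zero_mul]
    rw [← h0, e1, e2]
    simp
  · have hne : dz ≠ 0 := h0.ne'
    have hlam : (a*dx/dz) + (b*dy/dz) = 1 := by
      field_simp
      linarith [hdz]
    have hgz' : gz = Nz / dz := by
      rw [eq_div_iff hne]
      linear_combination hz
    have hgzeq : gz = (a*dx/dz) * gx + (b*dy/dz) * gy := by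
      rw [hgz', hNz, ← hx, ← hy]
      field_simp
    have h3 := hV gx hgx gy hgy _ _
      (div_nonneg (mul_nonneg ha hdx) h0.le)
      (div_nonneg (mul_nonneg hb hdy) h0.le) hlam
    rw [← hgzeq] at h3
    have h4 := mul_le_mul_of_nonneg_left h3 h0.le
    calc dz * V gz ≤ dz * ((a*dx/dz) * V gx + (b*dy/dz) * V gy + D) := h4
      _ = a * (dx * V gx) + b * (dy * V gy) + dz * D := by field_simp

set_option maxHeartbeats 1000000 in
lemma bellman_defect_step
    (R0 R1 η ρ0 ρ1 β p00 p10 e f : ℝ)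
    (hρ0 : 0 ≤ ρ0) (hρ : ρ0 < ρ1) (hρ1 : ρ1 ≤ 1)
    (hβ : β ∈ Set.Ioo (0:ℝ) 1)
    (γ1 γ0 γ2 : ℝ → ℝ)
    (hγ1 : ∀ π, γ1 π =
      ((1 - π) * ρ1 * p10 + π * ρ0 * p00) / (π * ρ0 + (1 - π) * ρ1))
    (hγ0 : ∀ π, γ0 π =
      ((1 - π) * (1 - ρ1) * p10 + π * (1 - ρ0) * p00)
        / (1 - (π * ρ0 + (1 - π) * ρ1)))
    (hγ2 : ∀ π, γ2 π = e * π + f)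
    (hmaps1 : Set.MapsTo γ1 (Set.Icc (0:ℝ) 1) (Set.Icc (0:ℝ) 1))
    (hmaps0 : Set.MapsTo γ0 (Set.Icc (0:ℝ) 1) (Set.Icc (0:ℝ) 1))
    (hmaps2 : Set.MapsTo γ2 (Set.Icc (0:ℝ) 1) (Set.Icc (0:ℝ) 1))
    (T : (ℝ → ℝ) → (ℝ → ℝ))
    (hT : ∀ V π,
      T V π =
        max
          (π * R0 + (1 - π) * R1 +
            β * ((π * ρ0 + (1 - π) * ρ1) * V (γ1 π) +
                 (1 - (π * ρ0 + (1 - π) * ρ1)) * V (γ0 π)))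
          (η + β * V (γ2 π)))
    (V : ℝ → ℝ) (D : ℝ)
    (hV : ∀ u ∈ Set.Icc (0:ℝ) 1, ∀ v ∈ Set.Icc (0:ℝ) 1, ∀ c d : ℝ,
      0 ≤ c → 0 ≤ d → c + d = 1 → V (c*u + d*v) ≤ c * V u + d * V v + D) :
    ∀ x ∈ Set.Icc (0:ℝ) 1, ∀ y ∈ Set.Icc (0:ℝ) 1, ∀ a b : ℝ,
      0 ≤ a → 0 ≤ b → a + b = 1 →
      T V (a*x + b*y) ≤ a * T V x + b * T V y + β * D := by
  intro x hx y hy a b ha hb hab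
  obtain ⟨hx0, hx1⟩ := hx
  obtain ⟨hy0, hy1⟩ := hy
  obtain ⟨hβ0, hβ1⟩ := hβ
  set z := a*x + b*y with hzdef
  have hz0 : 0 ≤ z := by positivity
  have hz1 : z ≤ 1 := by nlinarith
  have hz : z ∈ Set.Icc (0:ℝ) 1 := ⟨hz0, hz1⟩
  -- nonnegativity of ρ(w) and 1-ρ(w) on Icc
  have hρpos : ∀ w : ℝ, 0 ≤ w → w ≤ 1 → 0 ≤ w * ρ0 + (1-w) * ρ1 := by
    intro w h0 h1
    have := mul_nonneg h0 hρ0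
    have := mul_nonneg (by linarith : (0:ℝ) ≤ 1 - w) (by linarith : (0:ℝ) ≤ ρ1)
    linarith
  have hρle : ∀ w : ℝ, 0 ≤ w → w ≤ 1 → w * ρ0 + (1-w) * ρ1 ≤ 1 := by
    intro w h0 h1
    nlinarith
  -- the key product identities d(w) * γ(w) = N(w)
  have hdN1 : ∀ w : ℝ, 0 ≤ w → w ≤ 1 →
      (w * ρ0 + (1-w) * ρ1) * γ1 w = (1-w) * ρ1 * p10 + w * ρ0 * p00 := by
    intro w h0 h1
    rw [hγ1]
    rcases eq_or_ne (w * ρ0 + (1-w) * ρ1) 0 with h | h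
    · have t1 : 0 ≤ w * ρ0 := mul_nonneg h0 hρ0
      have t2 : 0 ≤ (1-w) * ρ1 := mul_nonneg (by linarith) (by linarith)
      have e1 : w * ρ0 = 0 := by linarith
      have e2 : (1-w) * ρ1 = 0 := by linarith
      have hN : (1-w) * ρ1 * p10 + w * ρ0 * p00 = 0 := by
        linear_combination p10 * e2 + p00 * e1
      rw [h, hN]
      simp
    · rw [mul_comm, div_mul_cancel₀ _ h]
  have hdN0 : ∀ w : ℝ, 0 ≤ w → w ≤ 1 →
      (1 - (w * ρ0 + (1-w) * ρ1)) * γ0 w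
        = (1-w) * (1-ρ1) * p10 + w * (1-ρ0) * p00 := by
    intro w h0 h1
    rw [hγ0]
    rcases eq_or_ne (1 - (w * ρ0 + (1-w) * ρ1)) 0 with h | h
    · have t1 : 0 ≤ w * (1-ρ0) := mul_nonneg h0 (by linarith)
      have t2 : 0 ≤ (1-w) * (1-ρ1) := mul_nonneg (by linarith) (by linarith)
      have hsum : w * (1-ρ0) + (1-w) * (1-ρ1) = 0 := by linear_combination h
      have e1 : w * (1-ρ0) = 0 := by linarith
      have e2 : (1-w) * (1-ρ1) = 0 := by linarith
      have hN : (1-w) * (1-ρ1) * p10 + w * (1-ρ0) * p00 = 0 := by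
        linear_combination p10 * e2 + p00 * e1
      rw [h, hN]
      simp
    · rw [mul_comm, div_mul_cancel₀ _ h]
  -- affinity
  have hρaff : z * ρ0 + (1-z) * ρ1
      = a * (x * ρ0 + (1-x) * ρ1) + b * (y * ρ0 + (1-y) * ρ1) := by
    rw [hzdef]; linear_combination (-ρ1) * hab
  have hρaff' : 1 - (z * ρ0 + (1-z) * ρ1)
      = a * (1 - (x * ρ0 + (1-x) * ρ1)) + b * (1 - (y * ρ0 + (1-y) * ρ1)) := by
    rw [hzdef]; linear_combination (ρ1 - 1) * hab
  have hN1aff : (1-z) * ρ1 * p10 + z * ρ0 * p00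
      = a * ((1-x) * ρ1 * p10 + x * ρ0 * p00)
        + b * ((1-y) * ρ1 * p10 + y * ρ0 * p00) := by
    rw [hzdef]; linear_combination (-(ρ1 * p10)) * hab
  have hN0aff : (1-z) * (1-ρ1) * p10 + z * (1-ρ0) * p00
      = a * ((1-x) * (1-ρ1) * p10 + x * (1-ρ0) * p00)
        + b * ((1-y) * (1-ρ1) * p10 + y * (1-ρ0) * p00) := by
    rw [hzdef]; linear_combination (-((1-ρ1) * p10)) * hab
  -- perspective inequalities
  have e1 := persp_aux V D hV a b
    (x * ρ0 + (1-x) * ρ1) (y * ρ0 + (1-y) * ρ1) (z * ρ0 + (1-z) * ρ1)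
    (γ1 x) (γ1 y) (γ1 z)
    ((1-x) * ρ1 * p10 + x * ρ0 * p00) ((1-y) * ρ1 * p10 + y * ρ0 * p00)
    ((1-z) * ρ1 * p10 + z * ρ0 * p00)
    ha hb (hρpos x hx0 hx1) (hρpos y hy0 hy1) hρaff hN1aff
    (hmaps1 ⟨hx0, hx1⟩) (hmaps1 ⟨hy0, hy1⟩)
    (hdN1 x hx0 hx1) (hdN1 y hy0 hy1) (hdN1 z hz0 hz1)
  have e0 := persp_aux V D hV a b
    (1 - (x * ρ0 + (1-x) * ρ1)) (1 - (y * ρ0 + (1-y) * ρ1))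
    (1 - (z * ρ0 + (1-z) * ρ1))
    (γ0 x) (γ0 y) (γ0 z)
    ((1-x) * (1-ρ1) * p10 + x * (1-ρ0) * p00)
    ((1-y) * (1-ρ1) * p10 + y * (1-ρ0) * p00)
    ((1-z) * (1-ρ1) * p10 + z * (1-ρ0) * p00)
    ha hb (by linarith [hρle x hx0 hx1]) (by linarith [hρle y hy0 hy1])
    hρaff' hN0aff
    (hmaps0 ⟨hx0, hx1⟩) (hmaps0 ⟨hy0, hy1⟩)
    (hdN0 x hx0 hx1) (hdN0 y hy0 hy1) (hdN0 z hz0 hz1)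
  -- branch 2 inequality
  have hγ2aff : γ2 z = a * γ2 x + b * γ2 y := by
    rw [hγ2, hγ2, hγ2, hzdef]; linear_combination (-f) * hab
  have e2 : V (γ2 z) ≤ a * V (γ2 x) + b * V (γ2 y) + D := by
    have := hV (γ2 x) (hmaps2 ⟨hx0, hx1⟩) (γ2 y) (hmaps2 ⟨hy0, hy1⟩) a b ha hb hab
    rw [← hγ2aff] at this
    exact this
  rw [hT V z, hT V x, hT V y]
  have hMx1 := le_max_left
    (x * R0 + (1 - x) * R1 +
      β * ((x * ρ0 + (1 - x) * ρ1) * V (γ1 x) +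
           (1 - (x * ρ0 + (1 - x) * ρ1)) * V (γ0 x)))
    (η + β * V (γ2 x))
  have hMx2 := le_max_right
    (x * R0 + (1 - x) * R1 +
      β * ((x * ρ0 + (1 - x) * ρ1) * V (γ1 x) +
           (1 - (x * ρ0 + (1 - x) * ρ1)) * V (γ0 x)))
    (η + β * V (γ2 x))
  have hMy1 := le_max_left
    (y * R0 + (1 - y) * R1 +
      β * ((y * ρ0 + (1 - y) * ρ1) * V (γ1 y) +
           (1 - (y * ρ0 + (1 - y) * ρ1)) * V (γ0 y)))
    (η + β * V (γ2 y))
  have hMy2 := le_max_right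
    (y * R0 + (1 - y) * R1 +
      β * ((y * ρ0 + (1 - y) * ρ1) * V (γ1 y) +
           (1 - (y * ρ0 + (1 - y) * ρ1)) * V (γ0 y)))
    (η + β * V (γ2 y))
  apply max_le
  · -- first branch
    have hsum : (z * ρ0 + (1-z) * ρ1) * V (γ1 z)
        + (1 - (z * ρ0 + (1-z) * ρ1)) * V (γ0 z)
        ≤ a * ((x * ρ0 + (1-x) * ρ1) * V (γ1 x)
              + (1 - (x * ρ0 + (1-x) * ρ1)) * V (γ0 x))
          + b * ((y * ρ0 + (1-y) * ρ1) * V (γ1 y)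
              + (1 - (y * ρ0 + (1-y) * ρ1)) * V (γ0 y)) + D := by
      linarith [e1, e0]
    have hbs := mul_le_mul_of_nonneg_left hsum hβ0.le
    have haff : z * R0 + (1-z) * R1
        = a * (x * R0 + (1-x) * R1) + b * (y * R0 + (1-y) * R1) := by
      rw [hzdef]; linear_combination (-R1) * hab
    linarith [hbs, mul_le_mul_of_nonneg_left hMx1 ha, mul_le_mul_of_nonneg_left hMy1 hb]
  · -- second branch
    have hbs := mul_le_mul_of_nonneg_left e2 hβ0.le
    have hη : η = a * η + b * η := by linear_combination (-η) * hab
    linarith [hbs, mul_le_mul_of_nonneg_left hMx2 ha, mul_le_mul_of_nonneg_left hMy2 hb]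

theorem bellman_preserves_convexity
    (R0 R1 η ρ0 ρ1 β p00 p10 e f : ℝ)
    (hR : R0 < R1) (hρ0 : 0 ≤ ρ0) (hρ : ρ0 < ρ1) (hρ1 : ρ1 ≤ 1)
    (hβ : β ∈ Set.Ioo (0:ℝ) 1)
    (h10 : 0 ≤ p10) (hp : p10 < p00) (h00 : p00 ≤ 1)
    (γ1 γ0 γ2 : ℝ → ℝ)
    (hγ1 : ∀ π, γ1 π =
      ((1 - π) * ρ1 * p10 + π * ρ0 * p00) / (π * ρ0 + (1 - π) * ρ1))
    (hγ0 : ∀ π, γ0 π =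
      ((1 - π) * (1 - ρ1) * p10 + π * (1 - ρ0) * p00)
        / (1 - (π * ρ0 + (1 - π) * ρ1)))
    (hγ2 : ∀ π, γ2 π = e * π + f)
    (hmaps1 : Set.MapsTo γ1 (Set.Icc (0:ℝ) 1) (Set.Icc (0:ℝ) 1))
    (hmaps0 : Set.MapsTo γ0 (Set.Icc (0:ℝ) 1) (Set.Icc (0:ℝ) 1))
    (hmaps2 : Set.MapsTo γ2 (Set.Icc (0:ℝ) 1) (Set.Icc (0:ℝ) 1))
    (T : (ℝ → ℝ) → (ℝ → ℝ))
    (hT : ∀ V π,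
      T V π =
        max
          (π * R0 + (1 - π) * R1 +
            β * ((π * ρ0 + (1 - π) * ρ1) * V (γ1 π) +
                 (1 - (π * ρ0 + (1 - π) * ρ1)) * V (γ0 π)))
          (η + β * V (γ2 π))) :
    (∀ V : ℝ → ℝ, ConvexOn ℝ (Set.Icc (0:ℝ) 1) V →
        ConvexOn ℝ (Set.Icc (0:ℝ) 1) (T V)) ∧
    (∀ V : ℝ → ℝ, ContinuousOn V (Set.Icc (0:ℝ) 1) →
        (∀ π ∈ Set.Icc (0:ℝ) 1, T V π = V π) →
        ConvexOn ℝ (Set.Icc (0:ℝ) 1) V) := by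
  have key := bellman_defect_step R0 R1 η ρ0 ρ1 β p00 p10 e f
    hρ0 hρ hρ1 hβ γ1 γ0 γ2 hγ1 hγ0 hγ2 hmaps1 hmaps0 hmaps2 T hT
  constructor
  · intro V hV
    refine ⟨convex_Icc 0 1, ?_⟩
    intro x hx y hy a b ha hb hab
    have hV' : ∀ u ∈ Set.Icc (0:ℝ) 1, ∀ v ∈ Set.Icc (0:ℝ) 1, ∀ c d : ℝ,
        0 ≤ c → 0 ≤ d → c + d = 1 → V (c*u + d*v) ≤ c * V u + d * V v + 0 := by
      intro u hu v hv c d hc hd hcd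
      have := hV.2 hu hv hc hd hcd
      simpa [smul_eq_mul] using this
    have := key V 0 hV' x hx y hy a b ha hb hab
    simpa [smul_eq_mul] using this
  · intro V hcont hfix
    obtain ⟨C, hC⟩ := isCompact_Icc.exists_bound_of_continuousOn hcont
    have hC0 : 0 ≤ C := le_trans (norm_nonneg _) (hC 0 (by norm_num))
    -- defect β^n * (2C) for every n
    have hdef : ∀ n : ℕ, ∀ u ∈ Set.Icc (0:ℝ) 1, ∀ v ∈ Set.Icc (0:ℝ) 1, ∀ c d : ℝ,
        0 ≤ c → 0 ≤ d → c + d = 1 →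
        V (c*u + d*v) ≤ c * V u + d * V v + β^n * (2*C) := by
      intro n
      induction n with
      | zero =>
        intro u hu v hv c d hc hd hcd
        have huv : c*u + d*v ∈ Set.Icc (0:ℝ) 1 :=
          (convex_Icc (0:ℝ) 1) hu hv hc hd hcd
        have b1 := abs_le.mp (hC _ huv)
        have b2 := abs_le.mp (hC _ hu)
        have b3 := abs_le.mp (hC _ hv)
        have t1 : c * (-C) ≤ c * V u := mul_le_mul_of_nonneg_left b2.1 hc
        have t2 : d * (-C) ≤ d * V v := mul_le_mul_of_nonneg_left b3.1 hd
        have hcc : c * (-C) + d * (-C) = -C := by linear_combination (-C) * hcd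
        simp only [pow_zero, one_mul]
        linarith [b1.2]
      | succ n ih =>
        intro u hu v hv c d hc hd hcd
        have huv : c*u + d*v ∈ Set.Icc (0:ℝ) 1 :=
          (convex_Icc (0:ℝ) 1) hu hv hc hd hcd
        have := key V (β^n * (2*C)) ih u hu v hv c d hc hd hcd
        rw [hfix _ huv, hfix _ hu, hfix _ hv] at this
        calc V (c*u + d*v) ≤ c * V u + d * V v + β * (β^n * (2*C)) := this
          _ = c * V u + d * V v + β^(n+1) * (2*C) := by ring
    refine ⟨convex_Icc 0 1, ?_⟩
    intro x hx y hy a b ha hb hab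
    have hall : ∀ n : ℕ, V (a*x + b*y) ≤ a * V x + b * V y + β^n * (2*C) :=
      fun n => hdef n x hx y hy a b ha hb hab
    have hlim : Filter.Tendsto (fun n : ℕ => a * V x + b * V y + β^n * (2*C))
        Filter.atTop (nhds (a * V x + b * V y + 0)) := by
      apply Filter.Tendsto.const_add
      have hpow : Filter.Tendsto (fun n : ℕ => β^n) Filter.atTop (nhds 0) :=
        tendsto_pow_atTop_nhds_zero_of_lt_one hβ.1.le hβ.2
      simpa using hpow.mul_const (2*C)
    have := le_of_tendsto_of_tendsto' tendsto_const_nhds hlim (fun n => hall n)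
    simpa [smul_eq_mul] using this
end

section
/- Suppose p00 > p10 (positively correlated), ρ0 < ρ1, R0 < R1, and β ∈ (0,1). If V : [0,1] → ℝ is non-increasing, then TV is non-increasing, where (TV)(π) = max{ R_S(π) + β[ρ(π)V(γ₁(π)) + (1−ρ(π))V(γ₀(π))], η + βV(γ₂(π)) }. Consequently the fixed-point value function V*, as well as the play-value V_S and not-play value V_NS, are non-increasing in π. -/
set_option maxHeartbeats 1000000 in
theorem bellman_preserves_antitone
    (R0 R1 η ρ0 ρ1 β p00 p10 : ℝ) (K : ℕ) (hK : 1 ≤ K)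
    (hR : R0 < R1) (hρ0 : 0 ≤ ρ0) (hρ : ρ0 < ρ1) (hρ1 : ρ1 ≤ 1)
    (hβ : β ∈ Set.Ioo (0:ℝ) 1)
    (h10 : 0 ≤ p10) (hp : p10 < p00) (h00 : p00 ≤ 1)
    (γ1 γ0 γ2 : ℝ → ℝ)
    (hγ1 : ∀ π, γ1 π =
      ((1 - π) * ρ1 * p10 + π * ρ0 * p00) / (π * ρ0 + (1 - π) * ρ1))
    (hγ0 : ∀ π, γ0 π =
      ((1 - π) * (1 - ρ1) * p10 + π * (1 - ρ0) * p00)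
        / (1 - (π * ρ0 + (1 - π) * ρ1)))
    (hγ2 : ∀ π, γ2 π =
      (p00 - p10) ^ K * π + p10 * (1 - (p00 - p10) ^ K) / (1 - (p00 - p10)))
    (T : (ℝ → ℝ) → (ℝ → ℝ))
    (hT : ∀ V π,
      T V π =
        max
          (π * R0 + (1 - π) * R1 +
            β * ((π * ρ0 + (1 - π) * ρ1) * V (γ1 π) +
                 (1 - (π * ρ0 + (1 - π) * ρ1)) * V (γ0 π)))
          (η + β * V (γ2 π))) :
    (∀ V : ℝ → ℝ, AntitoneOn V (Set.Icc (0:ℝ) 1) →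
        AntitoneOn (T V) (Set.Icc (0:ℝ) 1)) ∧
    (∀ V : ℝ → ℝ,
        (∃ C : ℝ, ∀ π ∈ Set.Icc (0:ℝ) 1, |V π| ≤ C) →
        (∀ π ∈ Set.Icc (0:ℝ) 1, T V π = V π) →
        AntitoneOn V (Set.Icc (0:ℝ) 1) ∧
        AntitoneOn
          (fun π => π * R0 + (1 - π) * R1 +
            β * ((π * ρ0 + (1 - π) * ρ1) * V (γ1 π) +
                 (1 - (π * ρ0 + (1 - π) * ρ1)) * V (γ0 π)))
          (Set.Icc (0:ℝ) 1) ∧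
        AntitoneOn (fun π => η + β * V (γ2 π)) (Set.Icc (0:ℝ) 1)) := by
  classical
  obtain ⟨hβ0, hβ1⟩ := hβ
  have hρ1pos : 0 < ρ1 := lt_of_le_of_lt hρ0 hρ
  have hq : 0 < p00 - p10 := sub_pos.mpr hp
  have hp00 : 0 ≤ p00 := le_trans h10 hp.le
  have hsub : Set.Icc p10 p00 ⊆ Set.Icc (0:ℝ) 1 :=
    Set.Icc_subset_Icc h10 h00
  -- rho facts
  have hrho_nonneg : ∀ π ∈ Set.Icc (0:ℝ) 1, 0 ≤ π * ρ0 + (1 - π) * ρ1 := by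
    intro π hπ; obtain ⟨h0, h1⟩ := hπ; nlinarith
  have hrho_le_one : ∀ π ∈ Set.Icc (0:ℝ) 1, π * ρ0 + (1 - π) * ρ1 ≤ 1 := by
    intro π hπ; obtain ⟨h0, h1⟩ := hπ; nlinarith
  have hrho_anti : ∀ π π' : ℝ, π ≤ π' →
      π' * ρ0 + (1 - π') * ρ1 ≤ π * ρ0 + (1 - π) * ρ1 := by
    intro π π' hle; nlinarith
  have hDz1 : ∀ π ∈ Set.Icc (0:ℝ) 1, π * ρ0 + (1 - π) * ρ1 = 0 →
      π = 1 ∧ ρ0 = 0 := by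
    intro π hπ h; obtain ⟨h0, h1⟩ := hπ
    have hπ1 : π = 1 := by nlinarith
    refine ⟨hπ1, ?_⟩; rw [hπ1] at h; nlinarith
  have hDz0 : ∀ π ∈ Set.Icc (0:ℝ) 1, π * ρ0 + (1 - π) * ρ1 = 1 →
      π = 0 ∧ ρ1 = 1 := by
    intro π hπ h; obtain ⟨h0, h1⟩ := hπ
    have hπ0 : π = 0 := by nlinarith
    refine ⟨hπ0, ?_⟩; rw [hπ0] at h; nlinarith
  -- modified update functions (fixing junk values)
  obtain ⟨g1, hg1def⟩ : ∃ g : ℝ → ℝ, ∀ π, g π =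
      if π * ρ0 + (1 - π) * ρ1 = 0 then p00 else γ1 π := ⟨_, fun _ => rfl⟩
  obtain ⟨g0, hg0def⟩ : ∃ g : ℝ → ℝ, ∀ π, g π =
      if π * ρ0 + (1 - π) * ρ1 = 1 then p10 else γ0 π := ⟨_, fun _ => rfl⟩
  -- coefficient equations
  have hcoe1 : ∀ (V : ℝ → ℝ) (π : ℝ),
      (π * ρ0 + (1 - π) * ρ1) * V (γ1 π) = (π * ρ0 + (1 - π) * ρ1) * V (g1 π) := by
    intro V π; rw [hg1def]
    by_cases h : π * ρ0 + (1 - π) * ρ1 = 0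
    · rw [if_pos h, h]; ring
    · rw [if_neg h]
  have hcoe0 : ∀ (V : ℝ → ℝ) (π : ℝ),
      (1 - (π * ρ0 + (1 - π) * ρ1)) * V (γ0 π) =
      (1 - (π * ρ0 + (1 - π) * ρ1)) * V (g0 π) := by
    intro V π; rw [hg0def]
    by_cases h : π * ρ0 + (1 - π) * ρ1 = 1
    · rw [if_pos h, h]; ring
    · rw [if_neg h]
  -- bounds on g1, g0
  have hg1bnd : ∀ π ∈ Set.Icc (0:ℝ) 1, g1 π ∈ Set.Icc p10 p00 := by
    intro π hπ; obtain ⟨h0, h1⟩ := hπ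
    rw [hg1def]
    by_cases h : π * ρ0 + (1 - π) * ρ1 = 0
    · rw [if_pos h]; exact ⟨hp.le, le_refl _⟩
    · rw [if_neg h, hγ1]
      have hDpos : 0 < π * ρ0 + (1 - π) * ρ1 :=
        lt_of_le_of_ne (hrho_nonneg π ⟨h0, h1⟩) (Ne.symm h)
      constructor
      · rw [le_div_iff₀ hDpos]; nlinarith [mul_nonneg h0 hρ0]
      · rw [div_le_iff₀ hDpos]; nlinarith [mul_nonneg (by linarith : (0:ℝ) ≤ 1 - π) hρ1pos.le]
  have hg0bnd : ∀ π ∈ Set.Icc (0:ℝ) 1, g0 π ∈ Set.Icc p10 p00 := by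
    intro π hπ; obtain ⟨h0, h1⟩ := hπ
    rw [hg0def]
    by_cases h : π * ρ0 + (1 - π) * ρ1 = 1
    · rw [if_pos h]; exact ⟨le_refl _, hp.le⟩
    · rw [if_neg h, hγ0]
      have hDpos : 0 < 1 - (π * ρ0 + (1 - π) * ρ1) :=
        lt_of_le_of_ne (by linarith [hrho_le_one π ⟨h0, h1⟩]) (by intro hc; exact h (by linarith))
      constructor
      · rw [le_div_iff₀ hDpos]; nlinarith [mul_nonneg h0 (by linarith : (0:ℝ) ≤ 1 - ρ0)]
      · rw [div_le_iff₀ hDpos]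
        nlinarith [mul_nonneg (by linarith : (0:ℝ) ≤ 1 - π) (by linarith : (0:ℝ) ≤ 1 - ρ1)]
  -- monotonicity of g1
  have hg1mono : ∀ π ∈ Set.Icc (0:ℝ) 1, ∀ π' ∈ Set.Icc (0:ℝ) 1, π ≤ π' →
      g1 π ≤ g1 π' := by
    intro π hπ π' hπ' hle
    by_cases h' : π' * ρ0 + (1 - π') * ρ1 = 0
    · rw [hg1def π']; rw [if_pos h']; exact (hg1bnd π hπ).2
    by_cases h : π * ρ0 + (1 - π) * ρ1 = 0
    · obtain ⟨he1, _⟩ := hDz1 π hπ h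
      have : π' = π := le_antisymm (by rw [he1]; exact hπ'.2) hle
      rw [this]
    · rw [hg1def, hg1def, if_neg h, if_neg h', hγ1, hγ1]
      have hD : 0 < π * ρ0 + (1 - π) * ρ1 :=
        lt_of_le_of_ne (hrho_nonneg π hπ) (Ne.symm h)
      have hD' : 0 < π' * ρ0 + (1 - π') * ρ1 :=
        lt_of_le_of_ne (hrho_nonneg π' hπ') (Ne.symm h')
      rw [div_le_div_iff₀ hD hD']
      have key : 0 ≤ (π' - π) * ρ0 * ρ1 * (p00 - p10) :=
        mul_nonneg (mul_nonneg (mul_nonneg (sub_nonneg.mpr hle) hρ0) hρ1pos.le) hq.le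
      linarith [key]
  -- monotonicity of g0
  have hg0mono : ∀ π ∈ Set.Icc (0:ℝ) 1, ∀ π' ∈ Set.Icc (0:ℝ) 1, π ≤ π' →
      g0 π ≤ g0 π' := by
    intro π hπ π' hπ' hle
    by_cases h : π * ρ0 + (1 - π) * ρ1 = 1
    · rw [hg0def π]; rw [if_pos h]; exact (hg0bnd π' hπ').1
    by_cases h' : π' * ρ0 + (1 - π') * ρ1 = 1
    · obtain ⟨he1, _⟩ := hDz0 π' hπ' h'
      have : π = π' := le_antisymm hle (he1 ▸ hπ.1)
      rw [this]
    · rw [hg0def, hg0def, if_neg h, if_neg h', hγ0, hγ0]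
      have hD : 0 < 1 - (π * ρ0 + (1 - π) * ρ1) :=
        lt_of_le_of_ne (by linarith [hrho_le_one π hπ]) (by intro hc; exact h (by linarith))
      have hD' : 0 < 1 - (π' * ρ0 + (1 - π') * ρ1) :=
        lt_of_le_of_ne (by linarith [hrho_le_one π' hπ']) (by intro hc; exact h' (by linarith))
      rw [div_le_div_iff₀ hD hD']
      have key : 0 ≤ (π' - π) * (1 - ρ0) * (1 - ρ1) * (p00 - p10) :=
        mul_nonneg (mul_nonneg (mul_nonneg (sub_nonneg.mpr hle)
          (by linarith : (0:ℝ) ≤ 1 - ρ0)) (by linarith : (0:ℝ) ≤ 1 - ρ1)) hq.le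
      linarith [key]
  -- g1 ≤ g0
  have hg10 : ∀ π ∈ Set.Icc (0:ℝ) 1, g1 π ≤ g0 π := by
    intro π hπ
    by_cases h : π * ρ0 + (1 - π) * ρ1 = 0
    · obtain ⟨he1, he2⟩ := hDz1 π hπ h
      rw [hg1def, hg0def, if_pos h, if_neg (by rw [h]; norm_num), hγ0, he1, he2]
      norm_num
    by_cases h' : π * ρ0 + (1 - π) * ρ1 = 1
    · obtain ⟨he1, he2⟩ := hDz0 π hπ h'
      rw [hg1def, hg0def, if_neg h, if_pos h', hγ1, he1, he2]
      norm_num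
    · rw [hg1def, hg0def, if_neg h, if_neg h', hγ1, hγ0]
      have hD : 0 < π * ρ0 + (1 - π) * ρ1 :=
        lt_of_le_of_ne (hrho_nonneg π hπ) (Ne.symm h)
      have hD' : 0 < 1 - (π * ρ0 + (1 - π) * ρ1) :=
        lt_of_le_of_ne (by linarith [hrho_le_one π hπ]) (by intro hc; exact h' (by linarith))
      rw [div_le_div_iff₀ hD hD']
      have key : 0 ≤ π * (1 - π) * (ρ1 - ρ0) * (p00 - p10) :=
        mul_nonneg (mul_nonneg (mul_nonneg hπ.1
          (by linarith [hπ.2] : (0:ℝ) ≤ 1 - π)) (by linarith : (0:ℝ) ≤ ρ1 - ρ0)) hq.le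
      linarith [key]
  -- γ1 γ0 map into [0,1]
  have hγ1mem : ∀ π ∈ Set.Icc (0:ℝ) 1, γ1 π ∈ Set.Icc (0:ℝ) 1 := by
    intro π hπ
    by_cases h : π * ρ0 + (1 - π) * ρ1 = 0
    · obtain ⟨he1, he2⟩ := hDz1 π hπ h
      rw [hγ1, he1, he2]; norm_num
    · have := hsub (hg1bnd π hπ)
      rw [hg1def, if_neg h] at this; exact this
  have hγ0mem : ∀ π ∈ Set.Icc (0:ℝ) 1, γ0 π ∈ Set.Icc (0:ℝ) 1 := by
    intro π hπ
    by_cases h : π * ρ0 + (1 - π) * ρ1 = 1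
    · obtain ⟨he1, he2⟩ := hDz0 π hπ h
      rw [hγ0, he1, he2]; norm_num
    · have := hsub (hg0bnd π hπ)
      rw [hg0def, if_neg h] at this; exact this
  -- γ2 facts
  have hqK : 0 < (p00 - p10) ^ K := pow_pos hq K
  have hγ2mono : ∀ π π' : ℝ, π ≤ π' → γ2 π ≤ γ2 π' := by
    intro π π' hle; rw [hγ2, hγ2]
    nlinarith [mul_le_mul_of_nonneg_left hle hqK.le]
  have hγ2mem : ∀ π ∈ Set.Icc (0:ℝ) 1, γ2 π ∈ Set.Icc (0:ℝ) 1 := by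
    intro π hπ; obtain ⟨h0, h1⟩ := hπ
    rw [hγ2]
    by_cases hq1 : p00 - p10 = 1
    · rw [hq1]; norm_num; exact ⟨h0, h1⟩
    · have hq1' : 0 < 1 - (p00 - p10) :=
        lt_of_le_of_ne (by linarith) (by intro hc; exact hq1 (by linarith))
      have hqK1 : (p00 - p10) ^ K ≤ 1 := pow_le_one₀ hq.le (by linarith)
      constructor
      · have : 0 ≤ p10 * (1 - (p00 - p10) ^ K) / (1 - (p00 - p10)) :=
          div_nonneg (mul_nonneg h10 (by linarith)) hq1'.le
        nlinarith [mul_nonneg hqK.le h0]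
      · have : p10 * (1 - (p00 - p10) ^ K) / (1 - (p00 - p10)) ≤ 1 - (p00 - p10) ^ K := by
          rw [div_le_iff₀ hq1']
          nlinarith [mul_nonneg (by linarith : (0:ℝ) ≤ 1 - (p00 - p10) ^ K)
            (by linarith : (0:ℝ) ≤ 1 - p00)]
        nlinarith [mul_le_mul_of_nonneg_left h1 hqK.le]
  -- key monotonicity of the play-branch continuation
  have Fmono : ∀ V : ℝ → ℝ, AntitoneOn V (Set.Icc (0:ℝ) 1) →
      ∀ π ∈ Set.Icc (0:ℝ) 1, ∀ π' ∈ Set.Icc (0:ℝ) 1, π ≤ π' →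
      (π' * ρ0 + (1 - π') * ρ1) * V (γ1 π') +
        (1 - (π' * ρ0 + (1 - π') * ρ1)) * V (γ0 π') ≤
      (π * ρ0 + (1 - π) * ρ1) * V (γ1 π) +
        (1 - (π * ρ0 + (1 - π) * ρ1)) * V (γ0 π) := by
    intro V hV π hπ π' hπ' hle
    rw [hcoe1, hcoe0, hcoe1, hcoe0]
    have hA' : V (g1 π') ≤ V (g1 π) :=
      hV (hsub (hg1bnd π hπ)) (hsub (hg1bnd π' hπ')) (hg1mono π hπ π' hπ' hle)
    have hB' : V (g0 π') ≤ V (g0 π) :=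
      hV (hsub (hg0bnd π hπ)) (hsub (hg0bnd π' hπ')) (hg0mono π hπ π' hπ' hle)
    have hAB : V (g0 π) ≤ V (g1 π) :=
      hV (hsub (hg1bnd π hπ)) (hsub (hg0bnd π hπ)) (hg10 π hπ)
    have hr : π' * ρ0 + (1 - π') * ρ1 ≤ π * ρ0 + (1 - π) * ρ1 := hrho_anti π π' hle
    have hr0 : 0 ≤ π' * ρ0 + (1 - π') * ρ1 := hrho_nonneg π' hπ'
    have hr1 : π' * ρ0 + (1 - π') * ρ1 ≤ 1 := hrho_le_one π' hπ'
    nlinarith [mul_le_mul_of_nonneg_left hA' hr0,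
      mul_le_mul_of_nonneg_left hB' (by linarith : (0:ℝ) ≤ 1 - (π' * ρ0 + (1 - π') * ρ1)),
      mul_le_mul_of_nonneg_right hr (by linarith : (0:ℝ) ≤ V (g1 π) - V (g0 π))]
  -- the two branches preserve antitonicity
  have branchS : ∀ V : ℝ → ℝ, AntitoneOn V (Set.Icc (0:ℝ) 1) →
      AntitoneOn (fun π => π * R0 + (1 - π) * R1 +
          β * ((π * ρ0 + (1 - π) * ρ1) * V (γ1 π) +
               (1 - (π * ρ0 + (1 - π) * ρ1)) * V (γ0 π))) (Set.Icc (0:ℝ) 1) := by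
    intro V hV π hπ π' hπ' hle
    have hF := Fmono V hV π hπ π' hπ' hle
    have hRS : π' * R0 + (1 - π') * R1 ≤ π * R0 + (1 - π) * R1 := by nlinarith
    simp only
    nlinarith [mul_le_mul_of_nonneg_left hF hβ0.le]
  have branchNS : ∀ V : ℝ → ℝ, AntitoneOn V (Set.Icc (0:ℝ) 1) →
      AntitoneOn (fun π => η + β * V (γ2 π)) (Set.Icc (0:ℝ) 1) := by
    intro V hV π hπ π' hπ' hle
    have := hV (hγ2mem π hπ) (hγ2mem π' hπ') (hγ2mono π π' hle)
    simp only
    nlinarith [mul_le_mul_of_nonneg_left this hβ0.le]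
  have Tanti : ∀ V : ℝ → ℝ, AntitoneOn V (Set.Icc (0:ℝ) 1) →
      AntitoneOn (T V) (Set.Icc (0:ℝ) 1) := by
    intro V hV π hπ π' hπ' hle
    rw [hT, hT]
    exact max_le_max (branchS V hV hπ hπ' hle) (branchNS V hV hπ hπ' hle)
  refine ⟨Tanti, ?_⟩
  intro V ⟨C, hC⟩ hfix
  have hC0 : 0 ≤ C := le_trans (abs_nonneg _) (hC 0 ⟨le_refl _, zero_le_one⟩)
  -- contraction estimate
  have habs : ∀ r a b d : ℝ, 0 ≤ r → r ≤ 1 → |a| ≤ d → |b| ≤ d →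
      |r * a + (1 - r) * b| ≤ d := by
    intro r a b d hr0 hr1 ha hb
    rw [abs_le] at ha hb ⊢
    constructor <;> nlinarith [mul_le_mul_of_nonneg_left ha.2 hr0,
      mul_le_mul_of_nonneg_left hb.2 (by linarith : (0:ℝ) ≤ 1 - r),
      mul_le_mul_of_nonneg_left (neg_le.mp (neg_le.mpr ha.1)) hr0,
      mul_le_mul_of_nonneg_left hb.1 (by linarith : (0:ℝ) ≤ 1 - r),
      mul_le_mul_of_nonneg_left ha.1 hr0]
  have Tcontract : ∀ (U : ℝ → ℝ) (d : ℝ), (∀ σ ∈ Set.Icc (0:ℝ) 1, |U σ - V σ| ≤ d) →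
      ∀ π ∈ Set.Icc (0:ℝ) 1, |T U π - T V π| ≤ β * d := by
    intro U d hUV π hπ
    rw [hT, hT]
    refine le_trans (abs_max_sub_max_le_max _ _ _ _) (max_le ?_ ?_)
    · have e : (π * R0 + (1 - π) * R1 +
          β * ((π * ρ0 + (1 - π) * ρ1) * U (γ1 π) +
               (1 - (π * ρ0 + (1 - π) * ρ1)) * U (γ0 π))) -
          (π * R0 + (1 - π) * R1 +
          β * ((π * ρ0 + (1 - π) * ρ1) * V (γ1 π) +
               (1 - (π * ρ0 + (1 - π) * ρ1)) * V (γ0 π))) =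
          β * ((π * ρ0 + (1 - π) * ρ1) * (U (γ1 π) - V (γ1 π)) +
               (1 - (π * ρ0 + (1 - π) * ρ1)) * (U (γ0 π) - V (γ0 π))) := by ring
      rw [e, abs_mul, abs_of_nonneg hβ0.le]
      exact mul_le_mul_of_nonneg_left
        (habs _ _ _ _ (hrho_nonneg π hπ) (hrho_le_one π hπ)
          (hUV _ (hγ1mem π hπ)) (hUV _ (hγ0mem π hπ))) hβ0.le
    · have e : (η + β * U (γ2 π)) - (η + β * V (γ2 π)) =
          β * (U (γ2 π) - V (γ2 π)) := by ring
      rw [e, abs_mul, abs_of_nonneg hβ0.le]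
      exact mul_le_mul_of_nonneg_left (hUV _ (hγ2mem π hπ)) hβ0.le
  -- iterates
  have hW : ∀ n : ℕ, AntitoneOn (T^[n] (fun _ => (0:ℝ))) (Set.Icc (0:ℝ) 1) ∧
      ∀ π ∈ Set.Icc (0:ℝ) 1, |T^[n] (fun _ => (0:ℝ)) π - V π| ≤ β ^ n * C := by
    intro n
    induction n with
    | zero =>
      constructor
      · intro a _ b _ _; simp
      · intro π hπ
        simp only [Function.iterate_zero, id_eq, pow_zero, one_mul, zero_sub, abs_neg]
        exact hC π hπ
    | succ n ih =>
      constructor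
      · intro a ha b hb hab
        simp only [Function.iterate_succ_apply']
        exact Tanti _ ih.1 ha hb hab
      · intro π hπ
        simp only [Function.iterate_succ_apply']
        have := Tcontract _ _ ih.2 π hπ
        rw [hfix π hπ] at this
        calc |T (T^[n] fun _ => (0:ℝ)) π - V π| ≤ β * (β ^ n * C) := this
          _ = β ^ (n + 1) * C := by rw [pow_succ]; ring
  -- V is antitone
  have hVanti : AntitoneOn V (Set.Icc (0:ℝ) 1) := by
    intro π hπ π' hπ' hle
    by_contra hcon
    push_neg at hcon
    obtain ⟨n, hn⟩ := exists_pow_lt_of_lt_one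
      (show (0:ℝ) < (V π' - V π) / (2 * C + 1) from div_pos (by linarith) (by linarith)) hβ1
    rw [lt_div_iff₀ (by positivity)] at hn
    have h1 := (abs_le.mp ((hW n).2 π' hπ')).1
    have h2 := (abs_le.mp ((hW n).2 π hπ)).2
    have h3 := (hW n).1 hπ hπ' hle
    have hbn : 0 ≤ β ^ n := pow_nonneg hβ0.le n
    nlinarith [mul_le_mul_of_nonneg_left hC0 hbn, hn, h1, h2, h3, hbn]
  exact ⟨hVanti, branchS V hVanti, branchNS V hVanti⟩
end

section
/- Suppose p00 > p10, ρ0 < ρ1, R0 < R1, β ∈ (0,1), and that the no-observation belief update satisfies γ₂(π) = q for all π (the large-K approximation), where q = p10/(1 − (p00 − p10)). Then the difference d(π) = V_S(π) − V_NS(π) is non-increasing in π, where V_S(π) = R_S(π) + β[ρ(π)V(γ₁(π)) + (1−ρ(π))V(γ₀(π))] and V_NS(π) = η + βV(q). -/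
namespace AdvAux

/-- membership of the success-observation posterior in [0,1] -/
lemma g1_mem (ρ0 ρ1 p00 p10 : ℝ) (hρ0 : 0 ≤ ρ0) (hρ : ρ0 < ρ1) (hρ1 : ρ1 ≤ 1)
    (h10 : 0 ≤ p10) (hp : p10 < p00) (h00 : p00 ≤ 1)
    {x : ℝ} (hx : x ∈ Set.Icc (0:ℝ) 1) :
    ((1 - x) * ρ1 * p10 + x * ρ0 * p00) / (x * ρ0 + (1 - x) * ρ1) ∈ Set.Icc (0:ℝ) 1 := by
  obtain ⟨hx0, hx1⟩ := hx
  have hA : 0 ≤ x * ρ0 := mul_nonneg hx0 hρ0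
  have hB : 0 ≤ (1 - x) * ρ1 := mul_nonneg (by linarith) (by linarith)
  rcases eq_or_lt_of_le (by linarith : (0:ℝ) ≤ x * ρ0 + (1 - x) * ρ1) with hD | hD
  · rw [← hD, div_zero]; exact ⟨le_refl _, zero_le_one⟩
  · constructor
    · apply div_nonneg _ hD.le
      have := mul_nonneg hB h10
      have := mul_nonneg hA (le_of_lt (lt_of_le_of_lt h10 hp))
      nlinarith
    · rw [div_le_one hD]
      nlinarith [mul_nonneg hA (by linarith : (0:ℝ) ≤ 1 - p00),
        mul_nonneg hB (by linarith : (0:ℝ) ≤ 1 - p10)]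

/-- membership of the failure-observation posterior in [0,1] -/
lemma g0_mem (ρ0 ρ1 p00 p10 : ℝ) (hρ0 : 0 ≤ ρ0) (hρ : ρ0 < ρ1) (hρ1 : ρ1 ≤ 1)
    (h10 : 0 ≤ p10) (hp : p10 < p00) (h00 : p00 ≤ 1)
    {x : ℝ} (hx : x ∈ Set.Icc (0:ℝ) 1) :
    ((1 - x) * (1 - ρ1) * p10 + x * (1 - ρ0) * p00) / (1 - (x * ρ0 + (1 - x) * ρ1))
      ∈ Set.Icc (0:ℝ) 1 := by
  obtain ⟨hx0, hx1⟩ := hx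
  have hA : 0 ≤ x * (1 - ρ0) := mul_nonneg hx0 (by linarith)
  have hB : 0 ≤ (1 - x) * (1 - ρ1) := mul_nonneg (by linarith) (by linarith)
  have hid : 1 - (x * ρ0 + (1 - x) * ρ1) = x * (1 - ρ0) + (1 - x) * (1 - ρ1) := by ring
  rcases eq_or_lt_of_le (by linarith : (0:ℝ) ≤ 1 - (x * ρ0 + (1 - x) * ρ1)) with hD | hD
  · rw [← hD, div_zero]; exact ⟨le_refl _, zero_le_one⟩
  · constructor
    · apply div_nonneg _ hD.le
      have := mul_nonneg hB h10
      have := mul_nonneg hA (le_of_lt (lt_of_le_of_lt h10 hp))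
      nlinarith
    · rw [div_le_one hD]
      nlinarith [mul_nonneg hA (by linarith : (0:ℝ) ≤ 1 - p00),
        mul_nonneg hB (by linarith : (0:ℝ) ≤ 1 - p10)]

/-- q is in [0,1] -/
lemma q_mem (p00 p10 : ℝ) (h10 : 0 ≤ p10) (hp : p10 < p00) (h00 : p00 ≤ 1) :
    p10 / (1 - (p00 - p10)) ∈ Set.Icc (0:ℝ) 1 := by
  rcases eq_or_lt_of_le (by linarith : (0:ℝ) ≤ 1 - (p00 - p10)) with hD | hD
  · rw [← hD, div_zero]; exact ⟨le_refl _, zero_le_one⟩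
  · exact ⟨div_nonneg h10 hD.le, by rw [div_le_one hD]; linarith⟩

end AdvAux


namespace AdvAuxStep

set_option maxHeartbeats 1000000 in
lemma F_step (ρ0 ρ1 p00 p10 : ℝ) (hρ0 : 0 ≤ ρ0) (hρ : ρ0 < ρ1) (hρ1 : ρ1 ≤ 1)
    (h10 : 0 ≤ p10) (hp : p10 < p00) (h00 : p00 ≤ 1)
    (f : ℝ → ℝ) (hf : AntitoneOn f (Set.Icc (0:ℝ) 1))
    {x y : ℝ} (hx : x ∈ Set.Icc (0:ℝ) 1) (hy : y ∈ Set.Icc (0:ℝ) 1) (hxy : x ≤ y) :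
    (y * ρ0 + (1 - y) * ρ1) *
        f (((1 - y) * ρ1 * p10 + y * ρ0 * p00) / (y * ρ0 + (1 - y) * ρ1))
      + (1 - (y * ρ0 + (1 - y) * ρ1)) *
        f (((1 - y) * (1 - ρ1) * p10 + y * (1 - ρ0) * p00) / (1 - (y * ρ0 + (1 - y) * ρ1)))
    ≤ (x * ρ0 + (1 - x) * ρ1) *
        f (((1 - x) * ρ1 * p10 + x * ρ0 * p00) / (x * ρ0 + (1 - x) * ρ1))
      + (1 - (x * ρ0 + (1 - x) * ρ1)) *
        f (((1 - x) * (1 - ρ1) * p10 + x * (1 - ρ0) * p00) / (1 - (x * ρ0 + (1 - x) * ρ1))) := by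
  obtain ⟨hx0, hx1⟩ := hx
  obtain ⟨hy0, hy1⟩ := hy
  have hρ1pos : 0 < ρ1 := lt_of_le_of_lt hρ0 hρ
  have hp00pos : 0 < p00 := lt_of_le_of_lt h10 hp
  have hp00mem : p00 ∈ Set.Icc (0:ℝ) 1 := ⟨hp00pos.le, h00⟩
  have hp10mem : p10 ∈ Set.Icc (0:ℝ) 1 := ⟨h10, by linarith⟩
  have g1_bnd : ∀ z, 0 ≤ z → z ≤ 1 → 0 < z * ρ0 + (1 - z) * ρ1 →
      p10 ≤ ((1 - z) * ρ1 * p10 + z * ρ0 * p00) / (z * ρ0 + (1 - z) * ρ1) ∧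
      ((1 - z) * ρ1 * p10 + z * ρ0 * p00) / (z * ρ0 + (1 - z) * ρ1) ≤ p00 := by
    intro z hz0 hz1 hD
    constructor
    · rw [le_div_iff₀ hD]
      nlinarith [mul_nonneg (mul_nonneg hz0 hρ0) (by linarith : (0:ℝ) ≤ p00 - p10)]
    · rw [div_le_iff₀ hD]
      nlinarith [mul_nonneg (mul_nonneg (by linarith : (0:ℝ) ≤ 1 - z) hρ1pos.le)
        (by linarith : (0:ℝ) ≤ p00 - p10)]
  have g0_bnd : ∀ z, 0 ≤ z → z ≤ 1 → 0 < 1 - (z * ρ0 + (1 - z) * ρ1) →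
      p10 ≤ ((1 - z) * (1 - ρ1) * p10 + z * (1 - ρ0) * p00) / (1 - (z * ρ0 + (1 - z) * ρ1)) ∧
      ((1 - z) * (1 - ρ1) * p10 + z * (1 - ρ0) * p00) / (1 - (z * ρ0 + (1 - z) * ρ1)) ≤ p00 := by
    intro z hz0 hz1 hD
    constructor
    · rw [le_div_iff₀ hD]
      nlinarith [mul_nonneg (mul_nonneg hz0 (by linarith : (0:ℝ) ≤ 1 - ρ0))
        (by linarith : (0:ℝ) ≤ p00 - p10)]
    · rw [div_le_iff₀ hD]
      nlinarith [mul_nonneg (mul_nonneg (by linarith : (0:ℝ) ≤ 1 - z)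
        (by linarith : (0:ℝ) ≤ 1 - ρ1)) (by linarith : (0:ℝ) ≤ p00 - p10)]
  have hDy0 : (0:ℝ) ≤ y * ρ0 + (1 - y) * ρ1 := by
    have := mul_nonneg hy0 hρ0
    have := mul_nonneg (by linarith : (0:ℝ) ≤ 1 - y) hρ1pos.le
    linarith
  have hDx0 : (0:ℝ) ≤ x * ρ0 + (1 - x) * ρ1 := by
    have := mul_nonneg hx0 hρ0
    have := mul_nonneg (by linarith : (0:ℝ) ≤ 1 - x) hρ1pos.le
    linarith
  have hDyx : y * ρ0 + (1 - y) * ρ1 ≤ x * ρ0 + (1 - x) * ρ1 := by nlinarith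
  have hDx1 : x * ρ0 + (1 - x) * ρ1 ≤ 1 := by nlinarith
  rcases eq_or_lt_of_le hDy0 with hDyz | hDypos
  · -- Case A : Dy = 0, forces y = 1 and ρ0 = 0
    have hy' : y = 1 := by
      by_contra hne
      have h1y : 0 < 1 - y := lt_of_le_of_ne (by linarith) (fun h => hne (by linarith))
      nlinarith [mul_pos h1y hρ1pos, mul_nonneg hy0 hρ0]
    subst hy'
    have hρ0' : ρ0 = 0 := by nlinarith
    subst hρ0'
    norm_num at hDyz hDx0 hDyx hDx1 ⊢
    rcases eq_or_lt_of_le hx1 with hx' | hx'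
    · subst hx'
      norm_num
    · have hDxpos : 0 < (1 - x) * ρ1 := mul_pos (by linarith) hρ1pos
      have e1 : (1 - x) * ρ1 * p10 / ((1 - x) * ρ1) = p10 := by
        field_simp
      have hf1 : f p00 ≤ f p10 := hf hp10mem hp00mem hp.le
      rcases eq_or_lt_of_le hDx1 with hD1 | hD1
      · rw [e1, hD1]
        norm_num
        linarith
      · have hb := g0_bnd x hx0 (by linarith) (by norm_num; linarith)
        norm_num at hb
        have hmem : ((1 - x) * (1 - ρ1) * p10 + x * p00) / (1 - (1 - x) * ρ1)
            ∈ Set.Icc (0:ℝ) 1 := ⟨le_trans h10 hb.1, le_trans hb.2 h00⟩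
        have hf0 : f p00 ≤ f (((1 - x) * (1 - ρ1) * p10 + x * p00) / (1 - (1 - x) * ρ1)) :=
          hf hmem hp00mem hb.2
        rw [e1]
        nlinarith
  · -- Dy > 0 hence Dx > 0
    have hDxpos : (0:ℝ) < x * ρ0 + (1 - x) * ρ1 := lt_of_lt_of_le hDypos hDyx
    rcases eq_or_lt_of_le hDx1 with hDx1' | hDx1'
    · -- Case B : Dx = 1, forces x = 0 and ρ1 = 1
      have hx' : x = 0 := by
        by_contra hne
        have hxp : 0 < x := lt_of_le_of_ne hx0 (fun h => hne h.symm)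
        nlinarith [mul_nonneg (by linarith : (0:ℝ) ≤ 1 - x) (by linarith : (0:ℝ) ≤ 1 - ρ1)]
      subst hx'
      have hρ1' : ρ1 = 1 := by nlinarith
      subst hρ1'
      norm_num at hDypos hDyx hDy0 ⊢
      have hg1b := g1_bnd y hy0 hy1 (by norm_num; linarith)
      norm_num at hg1b
      have hg1mem : ((1 - y) * p10 + y * ρ0 * p00) / (y * ρ0 + (1 - y)) ∈ Set.Icc (0:ℝ) 1 :=
        ⟨le_trans h10 hg1b.1, le_trans hg1b.2 h00⟩
      have t1 : f (((1 - y) * p10 + y * ρ0 * p00) / (y * ρ0 + (1 - y))) ≤ f p10 :=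
        hf hp10mem hg1mem hg1b.1
      have hDy1 : y * ρ0 + (1 - y) ≤ 1 := by
        nlinarith [mul_nonneg hy0 (by linarith : (0:ℝ) ≤ 1 - ρ0)]
      rcases eq_or_lt_of_le hDy1 with h1 | h1
      · rw [h1] at t1 ⊢; norm_num at t1 ⊢; linarith
      · have hb := g0_bnd y hy0 hy1 (by norm_num; linarith)
        norm_num at hb
        have hmem : y * (1 - ρ0) * p00 / (1 - (y * ρ0 + (1 - y))) ∈ Set.Icc (0:ℝ) 1 :=
          ⟨le_trans h10 hb.1, le_trans hb.2 h00⟩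
        have t2 : f (y * (1 - ρ0) * p00 / (1 - (y * ρ0 + (1 - y)))) ≤ f p10 :=
          hf hp10mem hmem hb.1
        nlinarith [mul_le_mul_of_nonneg_left t1 hDy0,
          mul_le_mul_of_nonneg_left t2 (by linarith : (0:ℝ) ≤ 1 - (y * ρ0 + (1 - y)))]
    · -- Case C : generic, all denominators positive
      have hEx : (0:ℝ) < 1 - (x * ρ0 + (1 - x) * ρ1) := by linarith
      have hEy : (0:ℝ) < 1 - (y * ρ0 + (1 - y) * ρ1) := by linarith
      have hg1xb := g1_bnd x hx0 hx1 hDxpos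
      have hg1yb := g1_bnd y hy0 hy1 hDypos
      have hg0xb := g0_bnd x hx0 hx1 hEx
      have hg0yb := g0_bnd y hy0 hy1 hEy
      have hg1x_mem : ((1 - x) * ρ1 * p10 + x * ρ0 * p00) / (x * ρ0 + (1 - x) * ρ1)
          ∈ Set.Icc (0:ℝ) 1 := ⟨le_trans h10 hg1xb.1, le_trans hg1xb.2 h00⟩
      have hg1y_mem : ((1 - y) * ρ1 * p10 + y * ρ0 * p00) / (y * ρ0 + (1 - y) * ρ1)
          ∈ Set.Icc (0:ℝ) 1 := ⟨le_trans h10 hg1yb.1, le_trans hg1yb.2 h00⟩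
      have hg0x_mem : ((1 - x) * (1 - ρ1) * p10 + x * (1 - ρ0) * p00)
            / (1 - (x * ρ0 + (1 - x) * ρ1))
          ∈ Set.Icc (0:ℝ) 1 := ⟨le_trans h10 hg0xb.1, le_trans hg0xb.2 h00⟩
      have hg0y_mem : ((1 - y) * (1 - ρ1) * p10 + y * (1 - ρ0) * p00)
            / (1 - (y * ρ0 + (1 - y) * ρ1))
          ∈ Set.Icc (0:ℝ) 1 := ⟨le_trans h10 hg0yb.1, le_trans hg0yb.2 h00⟩
      have hg1mono : ((1 - x) * ρ1 * p10 + x * ρ0 * p00) / (x * ρ0 + (1 - x) * ρ1)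
          ≤ ((1 - y) * ρ1 * p10 + y * ρ0 * p00) / (y * ρ0 + (1 - y) * ρ1) := by
        rw [div_le_div_iff₀ hDxpos hDypos]
        nlinarith [mul_nonneg (mul_nonneg (mul_nonneg
          (by linarith : (0:ℝ) ≤ p00 - p10) hρ0) hρ1pos.le)
          (by linarith : (0:ℝ) ≤ y - x)]
      have hg0mono : ((1 - x) * (1 - ρ1) * p10 + x * (1 - ρ0) * p00)
            / (1 - (x * ρ0 + (1 - x) * ρ1))
          ≤ ((1 - y) * (1 - ρ1) * p10 + y * (1 - ρ0) * p00)
            / (1 - (y * ρ0 + (1 - y) * ρ1)) := by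
        rw [div_le_div_iff₀ hEx hEy]
        nlinarith [mul_nonneg (mul_nonneg (mul_nonneg
          (by linarith : (0:ℝ) ≤ p00 - p10) (by linarith : (0:ℝ) ≤ 1 - ρ0))
          (by linarith : (0:ℝ) ≤ 1 - ρ1)) (by linarith : (0:ℝ) ≤ y - x)]
      have hg10 : ((1 - x) * ρ1 * p10 + x * ρ0 * p00) / (x * ρ0 + (1 - x) * ρ1)
          ≤ ((1 - x) * (1 - ρ1) * p10 + x * (1 - ρ0) * p00)
            / (1 - (x * ρ0 + (1 - x) * ρ1)) := by
        rw [div_le_div_iff₀ hDxpos hEx]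
        nlinarith [mul_nonneg (mul_nonneg (mul_nonneg
          (by linarith : (0:ℝ) ≤ p00 - p10) hx0) (by linarith : (0:ℝ) ≤ 1 - x))
          (by linarith : (0:ℝ) ≤ ρ1 - ρ0)]
      have t1 := hf hg1x_mem hg1y_mem hg1mono
      have t2 := hf hg0x_mem hg0y_mem hg0mono
      have t3 := hf hg1x_mem hg0x_mem hg10
      linarith [mul_le_mul_of_nonneg_left t1 hDypos.le,
        mul_le_mul_of_nonneg_left t2 hEy.le,
        mul_le_mul_of_nonneg_left t3 (by linarith : (0:ℝ) ≤
          (x * ρ0 + (1 - x) * ρ1) - (y * ρ0 + (1 - y) * ρ1))]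

end AdvAuxStep


namespace AdvMain

noncomputable def Tup (R0 R1 η ρ0 ρ1 β q : ℝ) (γ1 γ0 : ℝ → ℝ) (g : ℝ → ℝ) (π : ℝ) : ℝ :=
  max
    (π * R0 + (1 - π) * R1 +
      β * ((π * ρ0 + (1 - π) * ρ1) * g (γ1 π) +
           (1 - (π * ρ0 + (1 - π) * ρ1)) * g (γ0 π)))
    (η + β * g q)

lemma Tup_contract (R0 R1 η ρ0 ρ1 β q : ℝ) (γ1 γ0 : ℝ → ℝ)
    (hβ0 : 0 ≤ β) (hρ0 : 0 ≤ ρ0) (hρ : ρ0 < ρ1) (hρ1 : ρ1 ≤ 1)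
    (hg1mem : ∀ π ∈ Set.Icc (0:ℝ) 1, γ1 π ∈ Set.Icc (0:ℝ) 1)
    (hg0mem : ∀ π ∈ Set.Icc (0:ℝ) 1, γ0 π ∈ Set.Icc (0:ℝ) 1)
    (hqmem : q ∈ Set.Icc (0:ℝ) 1)
    (g h : ℝ → ℝ) (c : ℝ) (hgh : ∀ z ∈ Set.Icc (0:ℝ) 1, |g z - h z| ≤ c)
    {π : ℝ} (hπ : π ∈ Set.Icc (0:ℝ) 1) :
    |Tup R0 R1 η ρ0 ρ1 β q γ1 γ0 g π - Tup R0 R1 η ρ0 ρ1 β q γ1 γ0 h π| ≤ β * c := by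
  obtain ⟨hπ0, hπ1⟩ := hπ
  have hρ1pos : 0 < ρ1 := lt_of_le_of_lt hρ0 hρ
  have hD0 : (0:ℝ) ≤ π * ρ0 + (1 - π) * ρ1 := by
    have := mul_nonneg hπ0 hρ0
    have := mul_nonneg (by linarith : (0:ℝ) ≤ 1 - π) hρ1pos.le
    linarith
  have hD1 : π * ρ0 + (1 - π) * ρ1 ≤ 1 := by nlinarith
  have hu := hgh (γ1 π) (hg1mem π ⟨hπ0, hπ1⟩)
  have hv := hgh (γ0 π) (hg0mem π ⟨hπ0, hπ1⟩)
  have hw := hgh q hqmem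
  have hc0 : 0 ≤ c := le_trans (abs_nonneg _) hw
  have h1 : |(π * R0 + (1 - π) * R1 +
      β * ((π * ρ0 + (1 - π) * ρ1) * g (γ1 π) +
           (1 - (π * ρ0 + (1 - π) * ρ1)) * g (γ0 π)))
      - (π * R0 + (1 - π) * R1 +
      β * ((π * ρ0 + (1 - π) * ρ1) * h (γ1 π) +
           (1 - (π * ρ0 + (1 - π) * ρ1)) * h (γ0 π)))| ≤ β * c := by
    have e : (π * R0 + (1 - π) * R1 +
      β * ((π * ρ0 + (1 - π) * ρ1) * g (γ1 π) +
           (1 - (π * ρ0 + (1 - π) * ρ1)) * g (γ0 π)))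
      - (π * R0 + (1 - π) * R1 +
      β * ((π * ρ0 + (1 - π) * ρ1) * h (γ1 π) +
           (1 - (π * ρ0 + (1 - π) * ρ1)) * h (γ0 π)))
      = β * ((π * ρ0 + (1 - π) * ρ1) * (g (γ1 π) - h (γ1 π)) +
             (1 - (π * ρ0 + (1 - π) * ρ1)) * (g (γ0 π) - h (γ0 π))) := by ring
    rw [e, abs_mul, abs_of_nonneg hβ0]
    have h2 : |(π * ρ0 + (1 - π) * ρ1) * (g (γ1 π) - h (γ1 π)) +
        (1 - (π * ρ0 + (1 - π) * ρ1)) * (g (γ0 π) - h (γ0 π))| ≤ c := by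
      calc |(π * ρ0 + (1 - π) * ρ1) * (g (γ1 π) - h (γ1 π)) +
          (1 - (π * ρ0 + (1 - π) * ρ1)) * (g (γ0 π) - h (γ0 π))|
          ≤ |(π * ρ0 + (1 - π) * ρ1) * (g (γ1 π) - h (γ1 π))| +
            |(1 - (π * ρ0 + (1 - π) * ρ1)) * (g (γ0 π) - h (γ0 π))| := abs_add_le _ _
        _ = (π * ρ0 + (1 - π) * ρ1) * |g (γ1 π) - h (γ1 π)| +
            (1 - (π * ρ0 + (1 - π) * ρ1)) * |g (γ0 π) - h (γ0 π)| := by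
            rw [abs_mul, abs_mul, abs_of_nonneg hD0,
              abs_of_nonneg (show (0:ℝ) ≤ 1 - (π * ρ0 + (1 - π) * ρ1) by linarith)]
        _ ≤ (π * ρ0 + (1 - π) * ρ1) * c + (1 - (π * ρ0 + (1 - π) * ρ1)) * c :=
            add_le_add (mul_le_mul_of_nonneg_left hu hD0)
              (mul_le_mul_of_nonneg_left hv (by linarith))
        _ = c := by ring
    exact mul_le_mul_of_nonneg_left h2 hβ0
  have h1' : |(η + β * g q) - (η + β * h q)| ≤ β * c := by
    have e : (η + β * g q) - (η + β * h q) = β * (g q - h q) := by ring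
    rw [e, abs_mul, abs_of_nonneg hβ0]
    exact mul_le_mul_of_nonneg_left hw hβ0
  calc |Tup R0 R1 η ρ0 ρ1 β q γ1 γ0 g π - Tup R0 R1 η ρ0 ρ1 β q γ1 γ0 h π|
      ≤ max (|(π * R0 + (1 - π) * R1 +
          β * ((π * ρ0 + (1 - π) * ρ1) * g (γ1 π) +
               (1 - (π * ρ0 + (1 - π) * ρ1)) * g (γ0 π)))
          - (π * R0 + (1 - π) * R1 +
          β * ((π * ρ0 + (1 - π) * ρ1) * h (γ1 π) +
               (1 - (π * ρ0 + (1 - π) * ρ1)) * h (γ0 π)))|)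
          (|(η + β * g q) - (η + β * h q)|) := abs_max_sub_max_le_max _ _ _ _
    _ ≤ β * c := max_le h1 h1'

end AdvMain


namespace AdvMain

lemma Tup_anti (R0 R1 η ρ0 ρ1 β p00 p10 q : ℝ) (γ1 γ0 : ℝ → ℝ)
    (hR : R0 < R1) (hβ0 : 0 ≤ β)
    (hρ0 : 0 ≤ ρ0) (hρ : ρ0 < ρ1) (hρ1 : ρ1 ≤ 1)
    (h10 : 0 ≤ p10) (hp : p10 < p00) (h00 : p00 ≤ 1)
    (hγ1 : ∀ π, γ1 π =
      ((1 - π) * ρ1 * p10 + π * ρ0 * p00) / (π * ρ0 + (1 - π) * ρ1))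
    (hγ0 : ∀ π, γ0 π =
      ((1 - π) * (1 - ρ1) * p10 + π * (1 - ρ0) * p00)
        / (1 - (π * ρ0 + (1 - π) * ρ1)))
    (g : ℝ → ℝ) (hg : AntitoneOn g (Set.Icc (0:ℝ) 1)) :
    AntitoneOn (Tup R0 R1 η ρ0 ρ1 β q γ1 γ0 g) (Set.Icc (0:ℝ) 1) := by
  intro a ha b hb hab
  unfold Tup
  refine max_le_max ?_ le_rfl
  rw [hγ1 a, hγ1 b, hγ0 a, hγ0 b]
  have hF := AdvAuxStep.F_step ρ0 ρ1 p00 p10 hρ0 hρ hρ1 h10 hp h00 g hg ha hb hab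
  have hlin : b * R0 + (1 - b) * R1 ≤ a * R0 + (1 - a) * R1 := by nlinarith
  nlinarith [mul_le_mul_of_nonneg_left hF hβ0]

end AdvMain

theorem advantage_antitone_largeK
    (R0 R1 η ρ0 ρ1 β p00 p10 : ℝ)
    (hR : R0 < R1) (hρ0 : 0 ≤ ρ0) (hρ : ρ0 < ρ1) (hρ1 : ρ1 ≤ 1)
    (hβ : β ∈ Set.Ioo (0:ℝ) 1)
    (h10 : 0 ≤ p10) (hp : p10 < p00) (h00 : p00 ≤ 1)
    (γ1 γ0 : ℝ → ℝ)
    (hγ1 : ∀ π, γ1 π =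
      ((1 - π) * ρ1 * p10 + π * ρ0 * p00) / (π * ρ0 + (1 - π) * ρ1))
    (hγ0 : ∀ π, γ0 π =
      ((1 - π) * (1 - ρ1) * p10 + π * (1 - ρ0) * p00)
        / (1 - (π * ρ0 + (1 - π) * ρ1)))
    (q : ℝ) (hq : q = p10 / (1 - (p00 - p10)))
    (V : ℝ → ℝ)
    (hbdd : ∃ C : ℝ, ∀ π ∈ Set.Icc (0:ℝ) 1, |V π| ≤ C)
    (hfix : ∀ π ∈ Set.Icc (0:ℝ) 1,
      V π =
        max
          (π * R0 + (1 - π) * R1 +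
            β * ((π * ρ0 + (1 - π) * ρ1) * V (γ1 π) +
                 (1 - (π * ρ0 + (1 - π) * ρ1)) * V (γ0 π)))
          (η + β * V q)) :
    AntitoneOn
      (fun π =>
        (π * R0 + (1 - π) * R1 +
          β * ((π * ρ0 + (1 - π) * ρ1) * V (γ1 π) +
               (1 - (π * ρ0 + (1 - π) * ρ1)) * V (γ0 π)))
        - (η + β * V q))
      (Set.Icc (0:ℝ) 1) := by
  obtain ⟨hβ0, hβ1⟩ := hβ
  obtain ⟨C, hC⟩ := hbdd
  have hqmem : q ∈ Set.Icc (0:ℝ) 1 := by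
    rw [hq]; exact AdvAux.q_mem p00 p10 h10 hp h00
  have hg1mem : ∀ π ∈ Set.Icc (0:ℝ) 1, γ1 π ∈ Set.Icc (0:ℝ) 1 := by
    intro π hπ; rw [hγ1]
    exact AdvAux.g1_mem ρ0 ρ1 p00 p10 hρ0 hρ hρ1 h10 hp h00 hπ
  have hg0mem : ∀ π ∈ Set.Icc (0:ℝ) 1, γ0 π ∈ Set.Icc (0:ℝ) 1 := by
    intro π hπ; rw [hγ0]
    exact AdvAux.g0_mem ρ0 ρ1 p00 p10 hρ0 hρ hρ1 h10 hp h00 hπ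
  have hC0 : 0 ≤ C := le_trans (abs_nonneg _) (hC q hqmem)
  set T : (ℝ → ℝ) → ℝ → ℝ := AdvMain.Tup R0 R1 η ρ0 ρ1 β q γ1 γ0 with hT
  have hfix' : ∀ π ∈ Set.Icc (0:ℝ) 1, V π = T V π := by
    intro π hπ; rw [hfix π hπ]; rfl
  set W : ℕ → ℝ → ℝ := fun n => T^[n] (fun _ => 0) with hWdef
  have hWs : ∀ n, W (n + 1) = T (W n) := by
    intro n; rw [hWdef]; exact Function.iterate_succ_apply' T n _
  have hWanti : ∀ n, AntitoneOn (W n) (Set.Icc (0:ℝ) 1) := by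
    intro n
    induction n with
    | zero => exact antitoneOn_const
    | succ n ih =>
        rw [hWs]
        exact AdvMain.Tup_anti R0 R1 η ρ0 ρ1 β p00 p10 q γ1 γ0 hR hβ0.le hρ0 hρ hρ1
          h10 hp h00 hγ1 hγ0 (W n) ih
  have herr : ∀ n, ∀ π ∈ Set.Icc (0:ℝ) 1, |V π - W n π| ≤ β ^ n * C := by
    intro n
    induction n with
    | zero =>
        intro π hπ
        have h0 : W 0 π = 0 := rfl
        rw [h0]
        simpa using hC π hπ
    | succ n ih =>
        intro π hπ
        rw [hWs]
        have h1 : |T V π - T (W n) π| ≤ β * (β ^ n * C) :=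
          AdvMain.Tup_contract R0 R1 η ρ0 ρ1 β q γ1 γ0 hβ0.le hρ0 hρ hρ1
            hg1mem hg0mem hqmem V (W n) (β ^ n * C) ih hπ
        rw [← hfix' π hπ] at h1
        calc |V π - T (W n) π| ≤ β * (β ^ n * C) := h1
          _ = β ^ (n + 1) * C := by ring
  have hVanti : AntitoneOn V (Set.Icc (0:ℝ) 1) := by
    intro a ha b hb hab
    have key : ∀ n : ℕ, V b ≤ V a + 2 * (β ^ n * C) := by
      intro n
      have h1 := abs_le.1 (herr n a ha)
      have h2 := abs_le.1 (herr n b hb)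
      have h3 := hWanti n ha hb hab
      linarith [h1.1, h1.2, h2.1, h2.2]
    have hlim : Filter.Tendsto (fun n : ℕ => V a + 2 * (β ^ n * C)) Filter.atTop
        (nhds (V a + 2 * (0 * C))) := by
      exact Filter.Tendsto.const_add _
        ((((tendsto_pow_atTop_nhds_zero_of_lt_one hβ0.le hβ1).mul_const C)).const_mul 2)
    have := ge_of_tendsto hlim (Filter.Eventually.of_forall key)
    linarith
  intro a ha b hb hab
  simp only
  rw [hγ1 a, hγ1 b, hγ0 a, hγ0 b]
  have hF := AdvAuxStep.F_step ρ0 ρ1 p00 p10 hρ0 hρ hρ1 h10 hp h00 V hVanti ha hb hab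
  have hlin : b * R0 + (1 - b) * R1 ≤ a * R0 + (1 - a) * R1 := by
    obtain ⟨ha0, ha1⟩ := ha; obtain ⟨hb0, hb1⟩ := hb; nlinarith
  nlinarith [mul_le_mul_of_nonneg_left hF hβ0.le]
end

section
/- Let V_S(π, η) and V_NS(π, η) be continuous in (π, η), with V_S − V_NS strictly decreasing in π for each η, and define π_T(η) = inf{ π ∈ [0,1] : V_S(π,η) = V_NS(π,η) }. If for every η the right partial derivatives satisfy ∂V_S(π,η)/∂η < ∂V_NS(π,η)/∂η at π = π_T(η), then π_T is a monotonically non-increasing function of η. -/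
theorem threshold_monotone_in_subsidy
    (VS VNS : ℝ → ℝ → ℝ)
    (hcontS : Continuous (Function.uncurry VS))
    (hcontNS : Continuous (Function.uncurry VNS))
    (hstrict : ∀ η : ℝ,
      StrictAntiOn (fun π => VS π η - VNS π η) (Set.Icc (0:ℝ) 1))
    (πT : ℝ → ℝ)
    (hπT : ∀ η : ℝ,
      πT η = sInf {π | π ∈ Set.Icc (0:ℝ) 1 ∧ VS π η = VNS π η})
    (hne : ∀ η : ℝ, ∃ π ∈ Set.Icc (0:ℝ) 1, VS π η = VNS π η)
    (hderiv : ∀ η : ℝ, ∃ dS dNS : ℝ,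
      HasDerivWithinAt (fun t => VS (πT η) t) dS (Set.Ici η) η ∧
      HasDerivWithinAt (fun t => VNS (πT η) t) dNS (Set.Ici η) η ∧
      dS < dNS) :
    Antitone πT := by
  have hcπ : ∀ η : ℝ, Continuous (fun π => VS π η - VNS π η) := by
    intro η
    exact (hcontS.comp (continuous_id.prodMk continuous_const)).sub
      (hcontNS.comp (continuous_id.prodMk continuous_const))
  have hct : ∀ a : ℝ, Continuous (fun t => VS a t - VNS a t) := by
    intro a
    exact (hcontS.comp (continuous_const.prodMk continuous_id)).sub
      (hcontNS.comp (continuous_const.prodMk continuous_id))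
  -- πT η is a zero in [0,1]
  have hmem : ∀ η : ℝ, πT η ∈ Set.Icc (0:ℝ) 1 ∧ VS (πT η) η = VNS (πT η) η := by
    intro η
    have hZc : IsClosed {π | π ∈ Set.Icc (0:ℝ) 1 ∧ VS π η = VNS π η} := by
      have : {π | π ∈ Set.Icc (0:ℝ) 1 ∧ VS π η = VNS π η}
          = Set.Icc (0:ℝ) 1 ∩ {π | VS π η - VNS π η = 0} := by
        ext π; simp [sub_eq_zero]
      rw [this]
      exact isClosed_Icc.inter (isClosed_eq (hcπ η) continuous_const)
    have hZne : {π | π ∈ Set.Icc (0:ℝ) 1 ∧ VS π η = VNS π η}.Nonempty := by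
      obtain ⟨π, hπ, hπeq⟩ := hne η
      exact ⟨π, hπ, hπeq⟩
    have hbdd : BddBelow {π | π ∈ Set.Icc (0:ℝ) 1 ∧ VS π η = VNS π η} :=
      BddBelow.mono (fun π hπ => hπ.1) bddBelow_Icc
    have := hZc.csInf_mem hZne hbdd
    rw [← hπT η] at this
    exact this
  -- uniqueness of the zero
  have huniq : ∀ η a b : ℝ, a ∈ Set.Icc (0:ℝ) 1 → b ∈ Set.Icc (0:ℝ) 1 →
      VS a η = VNS a η → VS b η = VNS b η → a = b := by
    intro η a b ha hb hae hbe
    exact (hstrict η).injOn ha hb (by simp [sub_eq_zero, hae, hbe])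
  intro η₁ η₂ hle
  -- the set where f(πT η₁, ·) ≤ 0
  set s : Set ℝ := {t | VS (πT η₁) t - VNS (πT η₁) t ≤ 0} with hs
  have hsub : Set.Icc η₁ η₂ ⊆ s := by
    apply IsClosed.Icc_subset_of_forall_exists_gt
    · exact ((isClosed_le (hct (πT η₁)) continuous_const).inter isClosed_Icc)
    · show VS (πT η₁) η₁ - VNS (πT η₁) η₁ ≤ 0
      rw [(hmem η₁).2]; simp
    · rintro x ⟨hxs, hx12⟩ y hy
      have hxlt : x < y := hy
      have hIoc : Set.Ioc x y ∈ nhdsWithin x (Set.Ioi x) := Ioc_mem_nhdsGT_of_mem ⟨le_refl x, hxlt⟩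
      have hxle : VS (πT η₁) x - VNS (πT η₁) x ≤ 0 := hxs
      rcases lt_or_eq_of_le hxle with hlt | heq
      · -- strictly negative at x: stays negative nearby
        have hopen : IsOpen {t | VS (πT η₁) t - VNS (πT η₁) t < 0} :=
          isOpen_lt (hct (πT η₁)) continuous_const
        have hnhds : {t | VS (πT η₁) t - VNS (πT η₁) t < 0} ∈ nhdsWithin x (Set.Ioi x) :=
          mem_nhdsWithin_of_mem_nhds (hopen.mem_nhds hlt)
        have : ({t | VS (πT η₁) t - VNS (πT η₁) t < 0} ∩ Set.Ioc x y).Nonempty :=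
          (nhdsWithin x (Set.Ioi x)).nonempty_of_mem (Filter.inter_mem hnhds hIoc)
        obtain ⟨t, ht1, ht2⟩ := this
        exact ⟨t, show VS (πT η₁) t - VNS (πT η₁) t ≤ 0 from le_of_lt ht1, ht2⟩
      · -- f(πT η₁, x) = 0, so πT x = πT η₁; use the derivative condition at x
        have hzero : VS (πT η₁) x = VNS (πT η₁) x := sub_eq_zero.mp heq
        have hπeq : πT x = πT η₁ :=
          huniq x (πT x) (πT η₁) (hmem x).1 (hmem η₁).1 (hmem x).2 hzero
        obtain ⟨dS, dNS, hdS, hdNS, hdlt⟩ := hderiv x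
        have hder : HasDerivWithinAt (fun t => VS (πT x) t - VNS (πT x) t)
            (dS - dNS) (Set.Ici x) x := hdS.sub hdNS
        have hslope : Filter.Tendsto (slope (fun t => VS (πT x) t - VNS (πT x) t) x)
            (nhdsWithin x (Set.Ioi x)) (nhds (dS - dNS)) := by
          have := hasDerivWithinAt_iff_tendsto_slope.mp hder
          rwa [Set.Ici_sdiff_left] at this
        have hev : ∀ᶠ t in nhdsWithin x (Set.Ioi x),
            slope (fun t => VS (πT x) t - VNS (πT x) t) x t < 0 :=
          hslope.eventually_lt_const (by linarith)
        have hex := (hev.and (Filter.eventually_of_mem hIoc fun t ht => ht)).exists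
        obtain ⟨t, hts, ht2⟩ := hex
        refine ⟨t, ?_, ht2⟩
        have hx0 : VS (πT x) x - VNS (πT x) x = 0 := sub_eq_zero.mpr (hmem x).2
        have htpos : 0 < t - x := sub_pos.mpr ht2.1
        have : (VS (πT x) t - VNS (πT x) t) / (t - x) < 0 := by
          rw [slope_def_field, hx0, sub_zero] at hts
          exact hts
        have hneg : VS (πT x) t - VNS (πT x) t < 0 := by
          rcases div_neg_iff.mp this with ⟨_, h2⟩ | ⟨h1, _⟩
          · linarith
          · exact h1
        show VS (πT η₁) t - VNS (πT η₁) t ≤ 0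
        rw [← hπeq]; exact le_of_lt hneg
  have hη₂ : VS (πT η₁) η₂ - VNS (πT η₁) η₂ ≤ 0 := hsub ⟨hle, le_refl η₂⟩
  by_contra hcon
  push_neg at hcon
  have h1 : VS (πT η₂) η₂ - VNS (πT η₂) η₂ < VS (πT η₁) η₂ - VNS (πT η₁) η₂ :=
    hstrict η₂ (hmem η₁).1 (hmem η₂).1 hcon
  have h0 : VS (πT η₂) η₂ - VNS (πT η₂) η₂ = 0 := sub_eq_zero.mpr (hmem η₂).2
  linarith
end

section
/- For the two-state lazy restless bandit with p00 > p10, perfect observation ρ0 = 0, ρ1 = 1, discount β ∈ (0,1), and belief π ∈ [0, p10] (region A₁), the Whittle index equals the immediate expected reward: W(π) = R_S(π) = R1 + π(R0 − R1). -/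
set_option maxHeartbeats 2000000 in
theorem whittle_index_region_A1
    (R0 R1 β p00 p10 : ℝ) (K : ℕ) (hK : 1 ≤ K)
    (hR : R0 < R1) (hβ : β ∈ Set.Ioo (0:ℝ) 1)
    (h10 : 0 ≤ p10) (hp : p10 < p00) (h00 : p00 ≤ 1) (hdiff : p00 - p10 < 1)
    (γ2 : ℝ → ℝ)
    (hγ2 : ∀ π, γ2 π =
      (p00 - p10) ^ K * π + p10 * (1 - (p00 - p10) ^ K) / (1 - (p00 - p10)))
    -- V η π is the optimal value with subsidy η at belief π; with ρ0 = 0, ρ1 = 1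
    -- the ACK update is p10 and the NACK update is p00.
    (V : ℝ → ℝ → ℝ)
    (hbdd : ∀ η : ℝ, ∃ C : ℝ, ∀ π ∈ Set.Icc (0:ℝ) 1, |V η π| ≤ C)
    (hfix : ∀ η : ℝ, ∀ π ∈ Set.Icc (0:ℝ) 1,
      V η π =
        max
          (π * R0 + (1 - π) * R1 + β * ((1 - π) * V η p10 + π * V η p00))
          (η + β * V η (γ2 π)))
    (W : ℝ → ℝ)
    (hW : ∀ π, W π = sInf {η : ℝ |
      π * R0 + (1 - π) * R1 + β * ((1 - π) * V η p10 + π * V η p00)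
        = η + β * V η (γ2 π)}) :
    ∀ π ∈ Set.Icc (0:ℝ) p10, W π = R1 + π * (R0 - R1) := by
  classical
  obtain ⟨hβ0, hβ1⟩ := hβ
  have h1β : 0 < 1 - β := by linarith
  have hb0 : 0 < p00 - p10 := by linarith
  have hb1 : p00 - p10 < 1 := hdiff
  have hbK0 : 0 < (p00 - p10) ^ K := pow_pos hb0 K
  have hbKb : (p00 - p10) ^ K ≤ p00 - p10 := by
    calc (p00 - p10) ^ K ≤ (p00 - p10) ^ 1 :=
          pow_le_pow_of_le_one hb0.le hb1.le hK
      _ = p00 - p10 := pow_one _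
  have hbK1 : (p00 - p10) ^ K ≤ 1 := le_trans hbKb (by linarith)
  have hp10le1 : p10 ≤ 1 := le_trans hp.le h00
  -- the image of γ2 lies in [p10, 1]
  have hγJ : ∀ y, 0 ≤ y → y ≤ 1 → p10 ≤ γ2 y ∧ γ2 y ≤ 1 := by
    intro y h0 h1
    rw [hγ2]
    have h1b : 0 < 1 - (p00 - p10) := by linarith
    constructor
    · have hA : p10 * (1 - (p00 - p10)) ≤ p10 * (1 - (p00 - p10) ^ K) := by nlinarith
      have hB : p10 ≤ p10 * (1 - (p00 - p10) ^ K) / (1 - (p00 - p10)) := by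
        rw [le_div_iff₀ h1b]; linarith
      nlinarith [mul_nonneg hbK0.le h0]
    · have hA : p10 * (1 - (p00 - p10) ^ K) / (1 - (p00 - p10)) ≤ 1 - (p00 - p10) ^ K := by
        rw [div_le_iff₀ h1b]; nlinarith
      nlinarith [mul_le_mul_of_nonneg_left h1 hbK0.le]
  have hγmono : ∀ x y, x ≤ y → γ2 x ≤ γ2 y := by
    intro x y hxy
    rw [hγ2, hγ2]
    have := mul_le_mul_of_nonneg_left hxy hbK0.le
    linarith
  have hmemI : ∀ y, p10 ≤ y → y ≤ 1 → y ∈ Set.Icc (0:ℝ) 1 :=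
    fun y hy1 hy2 => ⟨le_trans h10 hy1, hy2⟩
  -- lower bound: V η ≥ η/(1-β) on [0,1]
  have lowV : ∀ η : ℝ, ∀ y ∈ Set.Icc (0:ℝ) 1, η / (1 - β) ≤ V η y := by
    intro η
    obtain ⟨C, hC⟩ := hbdd η
    have hne : (V η '' Set.Icc (0:ℝ) 1).Nonempty :=
      ⟨V η 0, ⟨0, ⟨le_refl _, zero_le_one⟩, rfl⟩⟩
    have hbb : BddBelow (V η '' Set.Icc (0:ℝ) 1) := by
      refine ⟨-C, ?_⟩
      rintro z ⟨y, hy, rfl⟩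
      have := abs_le.1 (hC y hy)
      linarith [this.1]
    set m := sInf (V η '' Set.Icc (0:ℝ) 1) with hm
    have hstep : ∀ y ∈ Set.Icc (0:ℝ) 1, η + β * m ≤ V η y := by
      intro y hy
      have hγ : γ2 y ∈ Set.Icc (0:ℝ) 1 := by
        obtain ⟨h1', h2'⟩ := hγJ y hy.1 hy.2
        exact ⟨le_trans h10 h1', h2'⟩
      have h3 : m ≤ V η (γ2 y) := csInf_le hbb ⟨γ2 y, hγ, rfl⟩
      have h4 : η + β * m ≤ η + β * V η (γ2 y) := by nlinarith
      calc η + β * m ≤ η + β * V η (γ2 y) := h4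
        _ ≤ max (y * R0 + (1 - y) * R1 + β * ((1 - y) * V η p10 + y * V η p00))
              (η + β * V η (γ2 y)) := le_max_right _ _
        _ = V η y := (hfix η y hy).symm
    have hm2 : η + β * m ≤ m := le_csInf hne (by rintro z ⟨y, hy, rfl⟩; exact hstep y hy)
    have hmge : η / (1 - β) ≤ m := by rw [div_le_iff₀ h1β]; nlinarith
    intro y hy
    exact le_trans hmge (csInf_le hbb ⟨y, hy, rfl⟩)
  -- monotonicity: V η is nonincreasing on [p10, 1]
  have monoV : ∀ η : ℝ, ∀ x y, p10 ≤ x → x ≤ y → y ≤ 1 → V η y ≤ V η x := by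
    intro η
    obtain ⟨C, hC⟩ := hbdd η
    set T : Set ℝ := {d | ∃ x y, p10 ≤ x ∧ x ≤ y ∧ y ≤ 1 ∧ d = V η y - V η x} with hT
    have h0T : (0:ℝ) ∈ T := ⟨p10, p10, le_refl _, le_refl _, hp10le1, by ring⟩
    have hbddT : BddAbove T := by
      refine ⟨2 * C, ?_⟩
      rintro d ⟨x, y, h1, h2, h3, rfl⟩
      have hx := abs_le.1 (hC x (hmemI x h1 (le_trans h2 h3)))
      have hy := abs_le.1 (hC y (hmemI y (le_trans h1 h2) h3))
      linarith [hx.1, hy.2]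
    set Φ := sSup T with hΦ
    have hΦ0 : 0 ≤ Φ := le_csSup hbddT h0T
    have hkey : ∀ d ∈ T, d ≤ β * Φ := by
      rintro d ⟨x, y, hx, hxy, hy1, rfl⟩
      have hxI := hmemI x hx (le_trans hxy hy1)
      have hyI := hmemI y (le_trans hx hxy) hy1
      have hpair1 : V η p00 - V η p10 ≤ Φ :=
        le_csSup hbddT ⟨p10, p00, le_refl _, hp.le, h00, rfl⟩
      have hAd : (y * R0 + (1 - y) * R1 + β * ((1 - y) * V η p10 + y * V η p00)) -
          (x * R0 + (1 - x) * R1 + β * ((1 - x) * V η p10 + x * V η p00)) ≤ β * Φ := by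
        have hd : (y * R0 + (1 - y) * R1 + β * ((1 - y) * V η p10 + y * V η p00)) -
            (x * R0 + (1 - x) * R1 + β * ((1 - x) * V η p10 + x * V η p00))
            = (y - x) * ((R0 - R1) + β * (V η p00 - V η p10)) := by ring
        have hyx0 : 0 ≤ y - x := by linarith
        have hyx1 : y - x ≤ 1 := by linarith [le_trans h10 hx]
        rcases le_or_gt ((R0 - R1) + β * (V η p00 - V η p10)) 0 with h | h
        · rw [hd]
          have := mul_nonpos_of_nonneg_of_nonpos hyx0 h
          nlinarith
        · rw [hd]
          have h5 : (y - x) * ((R0 - R1) + β * (V η p00 - V η p10)) ≤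
              (R0 - R1) + β * (V η p00 - V η p10) := by nlinarith
          nlinarith
      have hBd : (η + β * V η (γ2 y)) - (η + β * V η (γ2 x)) ≤ β * Φ := by
        have hγx := hγJ x hxI.1 hxI.2
        have hγy := hγJ y hyI.1 hyI.2
        have h5 : V η (γ2 y) - V η (γ2 x) ≤ Φ :=
          le_csSup hbddT ⟨γ2 x, γ2 y, hγx.1, hγmono x y hxy, hγy.2, rfl⟩
        nlinarith
      have hVy := hfix η y hyI
      have hVx := hfix η x hxI
      rw [hVy, hVx]
      have hmax : max (y * R0 + (1 - y) * R1 + β * ((1 - y) * V η p10 + y * V η p00))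
          (η + β * V η (γ2 y)) ≤
          max (x * R0 + (1 - x) * R1 + β * ((1 - x) * V η p10 + x * V η p00))
          (η + β * V η (γ2 x)) + β * Φ := by
        apply max_le
        · have := le_max_left (x * R0 + (1 - x) * R1 + β * ((1 - x) * V η p10 + x * V η p00))
            (η + β * V η (γ2 x))
          linarith
        · have := le_max_right (x * R0 + (1 - x) * R1 + β * ((1 - x) * V η p10 + x * V η p00))
            (η + β * V η (γ2 x))
          linarith
      linarith
    have hΦβ : Φ ≤ β * Φ := csSup_le ⟨0, h0T⟩ hkey
    have hΦle : Φ ≤ 0 := by nlinarith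
    intro x y hx hxy hy
    have := hkey _ ⟨x, y, hx, hxy, hy, rfl⟩
    nlinarith
  -- if η ≥ R_S(p10) then V η ≡ η/(1-β) on [p10,1]
  have UB : ∀ η : ℝ, p10 * R0 + (1 - p10) * R1 ≤ η →
      ∀ y ∈ Set.Icc p10 1, V η y = η / (1 - β) := by
    intro η hη
    obtain ⟨C, hC⟩ := hbdd η
    have hne : (V η '' Set.Icc p10 1).Nonempty :=
      ⟨V η p10, ⟨p10, ⟨le_refl _, hp10le1⟩, rfl⟩⟩
    have hba : BddAbove (V η '' Set.Icc p10 1) := by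
      refine ⟨C, ?_⟩
      rintro z ⟨y, hy, rfl⟩
      exact (abs_le.1 (hC y (hmemI y hy.1 hy.2))).2
    set M := sSup (V η '' Set.Icc p10 1) with hM
    have hstep : ∀ y ∈ Set.Icc p10 1, V η y ≤ η + β * M := by
      intro y hy
      have hyI := hmemI y hy.1 hy.2
      rw [hfix η y hyI]
      apply max_le
      · have h1 : V η p10 ≤ M := le_csSup hba ⟨p10, ⟨le_refl _, hp10le1⟩, rfl⟩
        have h2 : V η p00 ≤ M := le_csSup hba ⟨p00, ⟨hp.le, h00⟩, rfl⟩
        have hRS : y * R0 + (1 - y) * R1 ≤ p10 * R0 + (1 - p10) * R1 := by nlinarith [hy.1]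
        have hmix : (1 - y) * V η p10 + y * V η p00 ≤ M := by nlinarith [hyI.1, hy.2]
        nlinarith
      · obtain ⟨hg1, hg2⟩ := hγJ y hyI.1 hyI.2
        have h3 : V η (γ2 y) ≤ M := le_csSup hba ⟨γ2 y, ⟨hg1, hg2⟩, rfl⟩
        nlinarith
    have hMle : M ≤ η + β * M := csSup_le hne (by rintro z ⟨y, hy, rfl⟩; exact hstep y hy)
    have hM2 : M ≤ η / (1 - β) := by rw [le_div_iff₀ h1β]; nlinarith
    intro y hy
    refine le_antisymm (le_trans (le_csSup hba ⟨y, hy, rfl⟩) hM2) ?_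
    exact lowV η y (hmemI y hy.1 hy.2)
  -- main part
  intro π hπ
  obtain ⟨hπ0, hπ1⟩ := hπ
  have hπle1 : π ≤ 1 := le_trans hπ1 hp10le1
  rw [hW]
  have hmem : (R1 + π * (R0 - R1)) ∈ {η : ℝ |
      π * R0 + (1 - π) * R1 + β * ((1 - π) * V η p10 + π * V η p00)
        = η + β * V η (γ2 π)} := by
    have hcond : p10 * R0 + (1 - p10) * R1 ≤ R1 + π * (R0 - R1) := by nlinarith
    have h1 := UB _ hcond p10 ⟨le_refl _, hp10le1⟩
    have h2 := UB _ hcond p00 ⟨hp.le, h00⟩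
    obtain ⟨hg1, hg2⟩ := hγJ π hπ0 hπle1
    have h3 := UB _ hcond (γ2 π) ⟨hg1, hg2⟩
    show π * R0 + (1 - π) * R1 + β * ((1 - π) * V (R1 + π * (R0 - R1)) p10 +
        π * V (R1 + π * (R0 - R1)) p00) = (R1 + π * (R0 - R1)) +
        β * V (R1 + π * (R0 - R1)) (γ2 π)
    rw [h1, h2, h3]
    field_simp
    ring
  have hlb : ∀ η ∈ {η : ℝ |
      π * R0 + (1 - π) * R1 + β * ((1 - π) * V η p10 + π * V η p00)
        = η + β * V η (γ2 π)}, R1 + π * (R0 - R1) ≤ η := by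
    intro η hη
    by_contra hlt
    push_neg at hlt
    obtain ⟨e, heη⟩ : ∃ e : ℝ, (1 - β) * e = η := ⟨η / (1 - β), by field_simp⟩
    have hee : e = η / (1 - β) := eq_div_of_mul_eq (ne_of_gt h1β) (by linarith [heη])
    obtain ⟨C, hC⟩ := hbdd η
    set x : ℕ → ℝ := fun n => γ2^[n] (γ2 π) with hxdef
    have hx0 : x 0 = γ2 π := rfl
    have hxs : ∀ n, x (n + 1) = γ2 (x n) := by
      intro n
      simp only [hxdef]
      exact Function.iterate_succ_apply' γ2 n (γ2 π)
    have hxJ : ∀ n, p10 ≤ x n ∧ x n ≤ 1 := by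
      intro n
      induction n with
      | zero => exact hγJ π hπ0 hπle1
      | succ n ih =>
        rw [hxs]
        exact hγJ (x n) (le_trans h10 ih.1) ih.2
    have hup : e ≤ V η p10 := by rw [hee]; exact lowV η p10 (hmemI p10 (le_refl _) hp10le1)
    have hvp : e ≤ V η p00 := by rw [hee]; exact lowV η p00 (hmemI p00 hp.le h00)
    have hvu : V η p00 ≤ V η p10 := monoV η p10 p00 (le_refl _) hp.le h00
    have heq : π * R0 + (1 - π) * R1 + β * ((1 - π) * V η p10 + π * V η p00)
        = η + β * V η (x 0) := hη
    by_cases hall : ∀ n, V η (x n) = η + β * V η (x (n + 1))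
    · have hiter : ∀ n, V η (x 0) - e = β ^ n * (V η (x n) - e) := by
        intro n
        induction n with
        | zero => simp
        | succ n ih =>
          rw [ih, hall n, pow_succ]
          linear_combination (β ^ n) * heη.symm
      have hVx0 : V η (x 0) = e := by
        have habs : ∀ n, |V η (x 0) - e| ≤ β ^ n * (C + |e|) := by
          intro n
          rw [hiter n, abs_mul, abs_pow, abs_of_pos hβ0]
          have h5 := hC (x n) (hmemI _ (hxJ n).1 (hxJ n).2)
          have h6 : |V η (x n) - e| ≤ C + |e| := by
            calc |V η (x n) - e| ≤ |V η (x n)| + |e| := abs_sub _ _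
              _ ≤ C + |e| := by linarith
          exact mul_le_mul_of_nonneg_left h6 (pow_nonneg hβ0.le n)
        have hlim : Filter.Tendsto (fun n => β ^ n * (C + |e|)) Filter.atTop (nhds 0) := by
          have := (tendsto_pow_atTop_nhds_zero_of_lt_one hβ0.le hβ1).mul_const (C + |e|)
          simpa using this
        have h7 : |V η (x 0) - e| ≤ 0 :=
          ge_of_tendsto hlim (Filter.Eventually.of_forall habs)
        have h8 := abs_nonneg (V η (x 0) - e)
        have : |V η (x 0) - e| = 0 := le_antisymm h7 h8
        have := abs_eq_zero.1 this
        linarith [this]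
      rw [hVx0] at heq
      have hmixπ : e ≤ (1 - π) * V η p10 + π * V η p00 := by
        nlinarith [mul_nonneg hπ0 (sub_nonneg.2 hvp), mul_nonneg (sub_nonneg.2 hπle1) (sub_nonneg.2 hup)]
      have hlt' : η < π * R0 + (1 - π) * R1 := by
        have h9 : R1 + π * (R0 - R1) = π * R0 + (1 - π) * R1 := by ring
        linarith
      have h10' := mul_le_mul_of_nonneg_left hmixπ hβ0.le
      linarith
    · push_neg at hall
      set n₀ := Nat.find hall with hn₀def
      have hspec : V η (x n₀) ≠ η + β * V η (x (n₀ + 1)) := Nat.find_spec hall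
      have hmin : ∀ j, j < n₀ → V η (x j) = η + β * V η (x (j + 1)) := by
        intro j hj
        have := Nat.find_min hall hj
        exact not_not.1 this
      have hplay : V η (x n₀) = (x n₀) * R0 + (1 - x n₀) * R1 +
          β * ((1 - x n₀) * V η p10 + (x n₀) * V η p00) := by
        have h := hfix η (x n₀) (hmemI _ (hxJ n₀).1 (hxJ n₀).2)
        rcases max_choice ((x n₀) * R0 + (1 - x n₀) * R1 +
            β * ((1 - x n₀) * V η p10 + (x n₀) * V η p00)) (η + β * V η (γ2 (x n₀))) with h' | h'
        · rw [h, h']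
        · exfalso
          apply hspec
          rw [h, h', hxs n₀]
      have hkey : ∀ k, k ≤ n₀ → V η (x 0) = e * (1 - β ^ k) + β ^ k * V η (x k) := by
        intro k
        induction k with
        | zero => intro _; simp
        | succ k ih =>
          intro hk
          have h1 := ih (Nat.le_of_succ_le hk)
          have h2 := hmin k (Nat.lt_of_succ_le hk)
          rw [h1, h2, pow_succ]
          linear_combination (β ^ k) * heη.symm
      have hV0 := hkey n₀ le_rfl
      rw [hplay] at hV0
      set a := β ^ n₀ with ha
      have ha0 : 0 < a := pow_pos hβ0 _
      have ha1 : a ≤ 1 := pow_le_one₀ hβ0.le hβ1.le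
      have hβa1 : β * a < 1 := by nlinarith
      set xn := x n₀ with hxn
      set u := V η p10 with hu
      set v := V η p00 with hv
      have hπxn : π ≤ xn := le_trans hπ1 (hxJ n₀).1
      have hxn1 : xn ≤ 1 := (hxJ n₀).2
      have hxn0 : 0 ≤ xn := le_trans h10 (hxJ n₀).1
      set w := (1 - xn) * u + xn * v with hw
      have hmixcmp : w ≤ (1 - π) * u + π * v := by
        nlinarith [mul_nonneg (sub_nonneg.2 hπxn) (sub_nonneg.2 hvu)]
      have hwe : e ≤ w := by
        nlinarith [mul_nonneg hxn0 (sub_nonneg.2 hvp), mul_nonneg (sub_nonneg.2 hxn1) (sub_nonneg.2 hup)]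
      have hrs : xn * R0 + (1 - xn) * R1 ≤ π * R0 + (1 - π) * R1 := by nlinarith
      have heq2 : π * R0 + (1 - π) * R1 + β * ((1 - π) * u + π * v)
          = η + β * (e * (1 - a) + a * (xn * R0 + (1 - xn) * R1 + β * w)) := by
        rw [heq, hV0]
      have t1 : β * w ≤ β * ((1 - π) * u + π * v) :=
        mul_le_mul_of_nonneg_left hmixcmp hβ0.le
      have t2 : β * a * (xn * R0 + (1 - xn) * R1) ≤ β * a * (π * R0 + (1 - π) * R1) :=
        mul_le_mul_of_nonneg_left hrs (by positivity)
      have t3 : β * (1 - β * a) * e ≤ β * (1 - β * a) * w :=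
        mul_le_mul_of_nonneg_left hwe (by nlinarith)
      have hlt' : η < π * R0 + (1 - π) * R1 := by
        have h9 : R1 + π * (R0 - R1) = π * R0 + (1 - π) * R1 := by ring
        linarith
      have t4 : 0 < 1 - β * a := by linarith
      have t5 : β * a * ((1 - β) * e) = β * a * η := by rw [heη]
      have t6 : 0 < (1 - β * a) * (π * R0 + (1 - π) * R1 - η) := mul_pos t4 (by linarith)
      -- derive (R_S(π) - η)(1 - β a) ≤ 0, contradiction with η < R_S(π)
      linarith [heq2, t1, t2, t3, t5, t6]
  have hbb : BddBelow {η : ℝ |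
      π * R0 + (1 - π) * R1 + β * ((1 - π) * V η p10 + π * V η p00)
        = η + β * V η (γ2 π)} := ⟨R1 + π * (R0 - R1), fun η hη => hlb η hη⟩
  exact le_antisymm (csInf_le hbb hmem) (le_csInf ⟨_, hmem⟩ hlb)
end

section
/- Consider M single-armed problems with value functions V_m^λ : S_m → ℝ each satisfying V_m^λ(π_m) = max_{a ∈ {0,1}} { R_{a}(π_m) − λa + β Σ_o Pr(o | π_m, a) V_m^λ(Γ_o(π_m)) }, and define V^λ(π) = Nλ/(1−β) + Σ_{m=1}^M V_m^λ(π_m). Then V^λ satisfies the Lagrangian-relaxed Bellman equation V^λ(π) = max_{a ∈ {0,1}^M} { Σ_m R_{a_m}(π_m) + λ(N − Σ_m a_m) + β Σ_o Pr(o|π,a) V^λ(Γ_o(π)) }, where observations are independent across arms: Pr(o|π,a) = Π_m Pr(o_m|π_m,a_m) and Γ_o acts componentwise. -/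
/-!
Under a product observation kernel the expectation of an additively separable function splits
into the sum of the per-arm expectations, and the constant `C = Nλ/(1-β)` is a fixed point of
`C ↦ λN + βC`. Hence the joint objective of an action profile `a` equals `C + ∑ₘ Qₘ(aₘ)`, where
`Qₘ` is the single-arm objective, and its maximum over profiles is attained armwise, giving
`C + ∑ₘ Vₘ(πₘ)`.
-/

open Finset

theorem Fintype.sum_prod_mul_apply_of_sum_eq_one {ι R : Type*} {κ : ι → Type*} [Fintype ι]
    [DecidableEq ι] [∀ i, Fintype (κ i)] [CommSemiring R]
    (p : ∀ i, κ i → R) (hp : ∀ i, ∑ x, p i x = 1) (i : ι) (F : κ i → R) :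
    ∑ o : ∀ i, κ i, (∏ j, p j (o j)) * F (o i) = ∑ x, p i x * F x := by
  set q := Function.update p i fun x => p i x * F x
  have hq : ∀ o : ∀ i, κ i, ∏ j, q j (o j) = (∏ j, p j (o j)) * F (o i) := by
    intro o
    simp only [q, Function.apply_update (fun j (f : κ j → R) => f (o j)),
      prod_update_of_mem (mem_univ i), Fintype.prod_eq_mul_prod_compl i, compl_eq_univ_sdiff]
    ring
  calc ∑ o : ∀ i, κ i, (∏ j, p j (o j)) * F (o i)
      = ∏ j, ∑ x, q j x := by simp only [← hq, Fintype.prod_sum]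
    _ = ∑ x, p i x * F x := by
      rw [Fintype.prod_eq_single i fun j hj => by simp only [q, Function.update_of_ne hj, hp]]
      simp only [q, Function.update_self]

theorem Fintype.sum_prod_mul_const_add_sum_of_sum_eq_one {ι R : Type*} {κ : ι → Type*}
    [Fintype ι] [DecidableEq ι] [∀ i, Fintype (κ i)] [CommSemiring R]
    (p : ∀ i, κ i → R) (hp : ∀ i, ∑ x, p i x = 1) (c : R) (f : ∀ i, κ i → R) :
    ∑ o : ∀ i, κ i, (∏ j, p j (o j)) * (c + ∑ i, f i (o i)) = c + ∑ i, ∑ x, p i x * f i x := by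
  have hmass : ∑ o : ∀ i, κ i, ∏ j, p j (o j) = 1 := by
    rw [← Fintype.prod_sum]; exact Finset.prod_eq_one fun i _ => hp i
  simp only [mul_add, sum_add_distrib, ← sum_mul, hmass, one_mul, mul_sum]
  rw [sum_comm]
  simp only [Fintype.sum_prod_mul_apply_of_sum_eq_one p hp]

theorem ciSup_bool_eq_max {α : Type*} [ConditionallyCompleteLinearOrder α] (f : Bool → α) :
    ⨆ b, f b = max (f false) (f true) :=
  le_antisymm (ciSup_le <| Bool.forall_bool.2 ⟨le_max_left _ _, le_max_right _ _⟩)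
    (max_le (le_ciSup (Finite.bddAbove_range f) _) (le_ciSup (Finite.bddAbove_range f) _))

theorem ciSup_pi_sum {ι α : Type*} {κ : ι → Type*} [Fintype ι] [∀ i, Finite (κ i)]
    [∀ i, Nonempty (κ i)] [ConditionallyCompleteLinearOrder α] [AddCommMonoid α]
    [IsOrderedAddMonoid α] (Q : ∀ i, κ i → α) :
    ⨆ a : ∀ i, κ i, ∑ i, Q i (a i) = ∑ i, ⨆ x, Q i x := by
  choose best hbest using fun i => exists_eq_ciSup_of_finite (f := Q i)
  refine le_antisymm (ciSup_le fun a => sum_le_sum fun i _ => ?_) ?_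
  · exact le_ciSup (Finite.bddAbove_range (Q i)) (a i)
  · exact le_ciSup_of_le (Finite.bddAbove_range _) best (sum_congr rfl fun i _ => hbest i).ge

theorem lagrangian_decoupling_general
    (M N : ℕ) (β lam : ℝ) (hβ : β ∈ Set.Ioo (0:ℝ) 1)
    (S O : Fin M → Type) [∀ m, Fintype (S m)] [∀ m, Fintype (O m)]
    (R : ∀ m : Fin M, Bool → S m → ℝ)
    (P : ∀ m : Fin M, S m → Bool → O m → ℝ)
    (Γ : ∀ m : Fin M, Bool → O m → S m → S m)
    (hPsum : ∀ m s a, ∑ o : O m, P m s a o = 1)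
    (Vm : ∀ m : Fin M, S m → ℝ)
    (hVm : ∀ m : Fin M, ∀ s : S m,
      Vm m s =
        max
          (R m false s + β * ∑ o : O m, P m s false o * Vm m (Γ m false o s))
          (R m true s - lam + β * ∑ o : O m, P m s true o * Vm m (Γ m true o s)))
    (V : (∀ m : Fin M, S m) → ℝ)
    (hV : ∀ π : ∀ m : Fin M, S m,
      V π = (N : ℝ) * lam / (1 - β) + ∑ m : Fin M, Vm m (π m)) :
    ∀ π : ∀ m : Fin M, S m,
      V π =
        ⨆ a : Fin M → Bool,
          (∑ m : Fin M, R m (a m) (π m)) +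
          lam * ((N : ℝ) - ∑ m : Fin M, (if a m then (1:ℝ) else 0)) +
          β * ∑ o : (∀ m : Fin M, O m),
                (∏ m : Fin M, P m (π m) (a m) (o m)) *
                V (fun m => Γ m (a m) (o m) (π m)) := by
  intro π
  have hC : lam * N + β * ((N : ℝ) * lam / (1 - β)) = (N : ℝ) * lam / (1 - β) := by
    have : 1 - β ≠ 0 := by linarith [hβ.2]
    field_simp; ring
  set C := (N : ℝ) * lam / (1 - β)
  set Q : ∀ m, Bool → ℝ := fun m b => R m b (π m) - lam * (if b then 1 else 0) +
    β * ∑ x, P m (π m) b x * Vm m (Γ m b x (π m))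
  have hjoint : ∀ a : Fin M → Bool,
      (∑ m, R m (a m) (π m)) + lam * ((N : ℝ) - ∑ m, (if a m then (1:ℝ) else 0)) +
        β * ∑ o : (∀ m, O m), (∏ m, P m (π m) (a m) (o m)) * V (fun m => Γ m (a m) (o m) (π m))
      = C + ∑ m, Q m (a m) := by
    intro a
    simp only [hV]
    rw [Fintype.sum_prod_mul_const_add_sum_of_sum_eq_one (fun m => P m (π m) (a m))
      (fun m => hPsum m (π m) (a m)) C fun m y => Vm m (Γ m (a m) y (π m))]
    simp only [Q, sum_add_distrib, sum_sub_distrib, ← mul_sum]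
    linear_combination hC
  have harm_value : ∀ m, Vm m (π m) = ⨆ b, Q m b := by
    intro m
    rw [ciSup_bool_eq_max, hVm]
    simp only [Q]
    norm_num
  calc V π = C + ⨆ a : Fin M → Bool, ∑ m, Q m (a m) := by
        rw [ciSup_pi_sum, hV]; simp only [harm_value]
    _ = ⨆ a : Fin M → Bool, C + ∑ m, Q m (a m) :=
        (OrderIso.addLeft C).map_ciSup (Finite.bddAbove_range _)
    _ = _ := (iSup_congr hjoint).symm

theorem lagrangian_decoupling
    (M N : ℕ) (β lam : ℝ) (hβ : β ∈ Set.Ioo (0:ℝ) 1)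
    (S O : Fin M → Type) [∀ m, Fintype (S m)] [∀ m, Fintype (O m)]
    (R : ∀ m : Fin M, Bool → S m → ℝ)
    (P : ∀ m : Fin M, S m → Bool → O m → ℝ)
    (Γ : ∀ m : Fin M, Bool → O m → S m → S m)
    (hPnn : ∀ m s a o, 0 ≤ P m s a o)
    (hPsum : ∀ m s a, ∑ o : O m, P m s a o = 1)
    (Vm : ∀ m : Fin M, S m → ℝ)
    (hVm : ∀ m : Fin M, ∀ s : S m,
      Vm m s =
        max
          (R m false s + β * ∑ o : O m, P m s false o * Vm m (Γ m false o s))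
          (R m true s - lam + β * ∑ o : O m, P m s true o * Vm m (Γ m true o s)))
    (V : (∀ m : Fin M, S m) → ℝ)
    (hV : ∀ π : ∀ m : Fin M, S m,
      V π = (N : ℝ) * lam / (1 - β) + ∑ m : Fin M, Vm m (π m)) :
    ∀ π : ∀ m : Fin M, S m,
      V π =
        ⨆ a : Fin M → Bool,
          (∑ m : Fin M, R m (a m) (π m)) +
          lam * ((N : ℝ) - ∑ m : Fin M, (if a m then (1:ℝ) else 0)) +
          β * ∑ o : (∀ m : Fin M, O m),
                (∏ m : Fin M, P m (π m) (a m) (o m)) *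
                V (fun m => Γ m (a m) (o m) (π m)) :=
  lagrangian_decoupling_general M N β lam hβ S O R P Γ hPsum Vm hVm V hV
end
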